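/- arXiv:1005.1393 — 7 statements merged into one kernel-verified Lean document; each statement's English description precedes it below -/
import Mathlib

section
/- Suppose γ admits a Frenet system e₁, …, e_m of length m ≥ 4 with curvatures κ₁, …, κ_{m−1}, and suppose κ₁(t) ≠ 0 for all t. Then γ is biharmonic (τ₂(γ) ≡ 0) if and only if: κ₁ is constant, κ₂ is constant, κ₁² + κ₂² = 1, and κ₂κ₃ ≡ 0. -/
open scoped RealInnerProductSpace

noncomputable section

/-- Covariant derivative along the spherical curve `γ` of a vector field `V`,
for the Levi-Civita connection of the round metric on the unit sphere. -/
def cov {n : ℕ} (γ V : ℝ → EuclideanSpace ℝ (Fin (n+1))) :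
    ℝ → EuclideanSpace ℝ (Fin (n+1)) :=
  fun t => deriv V t - ⟪deriv V t, γ t⟫ • γ t

/-- The tension field of `γ`: `τ(γ) = ∇γ′`. -/
def tension {n : ℕ} (γ : ℝ → EuclideanSpace ℝ (Fin (n+1))) :
    ℝ → EuclideanSpace ℝ (Fin (n+1)) :=
  cov γ (deriv γ)

/-- The rough Laplacian along `γ`: `Δ̄V = −∇(∇V)`. -/
def lap {n : ℕ} (γ : ℝ → EuclideanSpace ℝ (Fin (n+1)))
    (V : ℝ → EuclideanSpace ℝ (Fin (n+1))) : ℝ → EuclideanSpace ℝ (Fin (n+1)) :=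
  fun t => -(cov γ (cov γ V) t)

/-- The curvature operator of the unit sphere along `γ`: `ℛ(V) = V − ⟨V, γ′⟩γ′`. -/
def curvOp {n : ℕ} (γ V : ℝ → EuclideanSpace ℝ (Fin (n+1))) :
    ℝ → EuclideanSpace ℝ (Fin (n+1)) :=
  fun t => V t - ⟪V t, deriv γ t⟫ • deriv γ t

/-- The `k`-tension field of `γ`: `τ_k(γ) = Δ̄(Δ̄^{k−2}τ(γ)) − ℛ(Δ̄^{k−2}τ(γ))`. -/
def tauK {n : ℕ} (k : ℕ) (γ : ℝ → EuclideanSpace ℝ (Fin (n+1))) :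
    ℝ → EuclideanSpace ℝ (Fin (n+1)) :=
  fun t => lap γ ((lap γ)^[k-2] (tension γ)) t - curvOp γ ((lap γ)^[k-2] (tension γ)) t

private lemma aux_inner_deriv {n : ℕ} {f g : ℝ → EuclideanSpace ℝ (Fin (n+1))}
    {f' g' : EuclideanSpace ℝ (Fin (n+1))} {t : ℝ} {c : ℝ}
    (hf : HasDerivAt f f' t) (hg : HasDerivAt g g' t)
    (h : ∀ s, ⟪f s, g s⟫ = c) : ⟪f t, g'⟫ + ⟪f', g t⟫ = 0 := by
  have h1 : HasDerivAt (fun s => ⟪f s, g s⟫) (⟪f t, g'⟫ + ⟪f', g t⟫) t := hf.inner ℝ hg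
  have h2 : HasDerivAt (fun s => ⟪f s, g s⟫) 0 t := by
    have : (fun s => ⟪f s, g s⟫) = fun _ => c := funext h
    rw [this]; exact hasDerivAt_const t c
  exact h1.unique h2

set_option maxHeartbeats 1000000 in
theorem stmt_4 (n : ℕ) (hn : 2 ≤ n) (γ : ℝ → EuclideanSpace ℝ (Fin (n+1)))
    (hγ : ContDiff ℝ (⊤ : ℕ∞) γ)
    (hsph : ∀ t, ⟪γ t, γ t⟫ = 1)
    (harc : ∀ t, ⟪deriv γ t, deriv γ t⟫ = 1)
    (m : ℕ) (hm : 4 ≤ m)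
    (e : ℕ → ℝ → EuclideanSpace ℝ (Fin (n+1))) (κ : ℕ → ℝ → ℝ)
    (he_smooth : ∀ i, 1 ≤ i → i ≤ m → ContDiff ℝ (⊤ : ℕ∞) (e i))
    (hκ_smooth : ∀ i, 1 ≤ i → i ≤ m - 1 → ContDiff ℝ (⊤ : ℕ∞) (κ i))
    (he_tangent : ∀ i, 1 ≤ i → i ≤ m → ∀ t, ⟪e i t, γ t⟫ = 0)
    (he_orthonormal : ∀ i j, 1 ≤ i → i ≤ m → 1 ≤ j → j ≤ m → ∀ t,
      ⟪e i t, e j t⟫ = if i = j then (1 : ℝ) else 0)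
    (he_one : e 1 = deriv γ)
    (hFrenet_one : ∀ t, cov γ (e 1) t = κ 1 t • e 2 t)
    (hFrenet : ∀ i, 2 ≤ i → i ≤ m - 1 → ∀ t,
      cov γ (e i) t = -(κ (i-1) t) • e (i-1) t + κ i t • e (i+1) t)
    (hκ1 : ∀ t, κ 1 t ≠ 0) :
    (∀ t, tauK 2 γ t = 0) ↔
      ((∀ s t, κ 1 s = κ 1 t) ∧ (∀ s t, κ 2 s = κ 2 t) ∧
        (∀ t, (κ 1 t)^2 + (κ 2 t)^2 = 1) ∧ (∀ t, κ 2 t * κ 3 t = 0)) := by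
  classical
  -- differentiability
  have hγd : Differentiable ℝ γ := hγ.differentiable (by simp)
  have hed : ∀ i, 1 ≤ i → i ≤ m → Differentiable ℝ (e i) := fun i h1 h2 =>
    (he_smooth i h1 h2).differentiable (by simp)
  have he1d := hed 1 (by omega) (by omega)
  have he2d := hed 2 (by omega) (by omega)
  have he3d := hed 3 (by omega) (by omega)
  have hκ1d : Differentiable ℝ (κ 1) := (hκ_smooth 1 (by omega) (by omega)).differentiable (by simp)
  have hκ2d : Differentiable ℝ (κ 2) := (hκ_smooth 2 (by omega) (by omega)).differentiable (by simp)
  have hκ1'd : Differentiable ℝ (deriv (κ 1)) :=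
    ((contDiff_infty_iff_deriv.mp ((hκ_smooth 1 (by omega) (by omega)).of_le (by simp))).2).differentiable
      (by simp)
  -- deriv γ = e 1
  have hdγ : ∀ t, HasDerivAt γ (e 1 t) t := by
    intro t; rw [he_one]; exact (hγd t).hasDerivAt
  -- orthonormality facts
  have hon : ∀ i j, 1 ≤ i → i ≤ 4 → 1 ≤ j → j ≤ 4 → ∀ t,
      ⟪e i t, e j t⟫ = if i = j then (1:ℝ) else 0 := fun i j h1 h2 h3 h4 t =>
    he_orthonormal i j h1 (by omega) h3 (by omega) t
  -- tangency
  have htan1 := he_tangent 1 (by omega) (by omega)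
  have htan2 := he_tangent 2 (by omega) (by omega)
  have htan3 := he_tangent 3 (by omega) (by omega)
  have htan4 := he_tangent 4 (by omega) (by omega)
  -- inner of deriv (e i) with γ
  have hinner_de : ∀ i, 1 ≤ i → i ≤ m → ∀ t,
      ⟪deriv (e i) t, γ t⟫ = -(if i = 1 then (1:ℝ) else 0) := by
    intro i h1 h2 t
    have h := aux_inner_deriv ((hed i h1 h2) t).hasDerivAt (hdγ t) (he_tangent i h1 h2)
    rw [he_orthonormal i 1 h1 h2 (by omega) (by omega) t] at h
    linarith
  -- derivative formulas for the frame
  have hde1 : ∀ t, deriv (e 1) t = κ 1 t • e 2 t - γ t := by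
    intro t
    have hc := hFrenet_one t
    unfold cov at hc
    rw [hinner_de 1 (by omega) (by omega) t] at hc
    norm_num at hc
    rw [eq_sub_iff_add_eq]; exact hc
  have hde2 : ∀ t, deriv (e 2) t = -(κ 1 t • e 1 t) + κ 2 t • e 3 t := by
    intro t
    have hc := hFrenet 2 (by omega) (by omega) t
    unfold cov at hc
    rw [hinner_de 2 (by omega) (by omega) t] at hc
    norm_num at hc
    exact hc
  have hde3 : ∀ t, deriv (e 3) t = -(κ 2 t • e 2 t) + κ 3 t • e 4 t := by
    intro t
    have hc := hFrenet 3 (by omega) (by omega) t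
    unfold cov at hc
    rw [hinner_de 3 (by omega) (by omega) t] at hc
    norm_num at hc
    exact hc
  have hE1 : ∀ t, HasDerivAt (e 1) (κ 1 t • e 2 t - γ t) t := by
    intro t; rw [← hde1 t]; exact (he1d t).hasDerivAt
  have hE2 : ∀ t, HasDerivAt (e 2) (-(κ 1 t • e 1 t) + κ 2 t • e 3 t) t := by
    intro t; rw [← hde2 t]; exact (he2d t).hasDerivAt
  have hE3 : ∀ t, HasDerivAt (e 3) (-(κ 2 t • e 2 t) + κ 3 t • e 4 t) t := by
    intro t; rw [← hde3 t]; exact (he3d t).hasDerivAt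
  -- the tension field
  have htension : ∀ t, tension γ t = κ 1 t • e 2 t := by
    intro t
    show cov γ (deriv γ) t = κ 1 t • e 2 t
    rw [← he_one]; exact hFrenet_one t
  have htf : tension γ = fun t => κ 1 t • e 2 t := funext htension
  -- first covariant derivative of the tension field
  have hWder : ∀ t, HasDerivAt (tension γ)
      (κ 1 t • (-(κ 1 t • e 1 t) + κ 2 t • e 3 t) + deriv (κ 1) t • e 2 t) t := by
    intro t
    rw [htf]
    exact ((hκ1d t).hasDerivAt).smul (hE2 t)
  have hcovT : ∀ t, cov γ (tension γ) t =
      (-(κ 1 t * κ 1 t)) • e 1 t + deriv (κ 1) t • e 2 t + (κ 1 t * κ 2 t) • e 3 t := by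
    intro t
    show deriv (tension γ) t - ⟪deriv (tension γ) t, γ t⟫ • γ t = _
    rw [(hWder t).deriv]
    rw [show ⟪κ 1 t • (-(κ 1 t • e 1 t) + κ 2 t • e 3 t) + deriv (κ 1) t • e 2 t, γ t⟫ = 0 by
      simp only [inner_add_left, inner_neg_left, real_inner_smul_left, htan1 t, htan2 t, htan3 t]
      ring]
    rw [zero_smul, sub_zero]
    module
  have hcovTf : cov γ (tension γ) = fun t =>
      (-(κ 1 t * κ 1 t)) • e 1 t + deriv (κ 1) t • e 2 t + (κ 1 t * κ 2 t) • e 3 t :=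
    funext hcovT
  -- second covariant derivative
  have hA : ∀ t, HasDerivAt (fun t => -(κ 1 t * κ 1 t))
      (-(deriv (κ 1) t * κ 1 t + κ 1 t * deriv (κ 1) t)) t := fun t =>
    (((hκ1d t).hasDerivAt.mul (hκ1d t).hasDerivAt)).neg
  have hB : ∀ t, HasDerivAt (deriv (κ 1)) (deriv (deriv (κ 1)) t) t := fun t =>
    (hκ1'd t).hasDerivAt
  have hC : ∀ t, HasDerivAt (fun t => κ 1 t * κ 2 t)
      (deriv (κ 1) t * κ 2 t + κ 1 t * deriv (κ 2) t) t := fun t =>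
    (hκ1d t).hasDerivAt.mul (hκ2d t).hasDerivAt
  have hW2der : ∀ t, HasDerivAt (cov γ (tension γ))
      ((-(κ 1 t * κ 1 t) • (κ 1 t • e 2 t - γ t) +
          (-(deriv (κ 1) t * κ 1 t + κ 1 t * deriv (κ 1) t)) • e 1 t +
        (deriv (κ 1) t • (-(κ 1 t • e 1 t) + κ 2 t • e 3 t) +
          deriv (deriv (κ 1)) t • e 2 t)) +
        ((κ 1 t * κ 2 t) • (-(κ 2 t • e 2 t) + κ 3 t • e 4 t) +
          (deriv (κ 1) t * κ 2 t + κ 1 t * deriv (κ 2) t) • e 3 t)) t := by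
    intro t
    rw [hcovTf]
    exact (((hA t).smul (hE1 t)).add ((hB t).smul (hE2 t))).add ((hC t).smul (hE3 t))
  have hcovW : ∀ t, cov γ (cov γ (tension γ)) t =
      (-(3 * κ 1 t * deriv (κ 1) t)) • e 1 t
      + (deriv (deriv (κ 1)) t - κ 1 t ^ 3 - κ 1 t * κ 2 t ^ 2) • e 2 t
      + (2 * deriv (κ 1) t * κ 2 t + κ 1 t * deriv (κ 2) t) • e 3 t
      + (κ 1 t * κ 2 t * κ 3 t) • e 4 t := by
    intro t
    show deriv (cov γ (tension γ)) t - ⟪deriv (cov γ (tension γ)) t, γ t⟫ • γ t = _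
    rw [(hW2der t).deriv]
    rw [show ⟪(-(κ 1 t * κ 1 t) • (κ 1 t • e 2 t - γ t) +
          (-(deriv (κ 1) t * κ 1 t + κ 1 t * deriv (κ 1) t)) • e 1 t +
        (deriv (κ 1) t • (-(κ 1 t • e 1 t) + κ 2 t • e 3 t) +
          deriv (deriv (κ 1)) t • e 2 t)) +
        ((κ 1 t * κ 2 t) • (-(κ 2 t • e 2 t) + κ 3 t • e 4 t) +
          (deriv (κ 1) t * κ 2 t + κ 1 t * deriv (κ 2) t) • e 3 t), γ t⟫
        = κ 1 t * κ 1 t by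
      simp only [inner_add_left, inner_sub_left, inner_neg_left, real_inner_smul_left,
        htan1 t, htan2 t, htan3 t, htan4 t, hsph t]
      ring]
    match_scalars <;> ring
  -- the explicit formula for the bitension field
  have htau : ∀ t, tauK 2 γ t =
      (3 * κ 1 t * deriv (κ 1) t) • e 1 t
      + (κ 1 t ^ 3 + κ 1 t * κ 2 t ^ 2 - deriv (deriv (κ 1)) t - κ 1 t) • e 2 t
      + (-(2 * deriv (κ 1) t * κ 2 t + κ 1 t * deriv (κ 2) t)) • e 3 t
      + (-(κ 1 t * κ 2 t * κ 3 t)) • e 4 t := by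
    intro t
    show lap γ ((lap γ)^[0] (tension γ)) t - curvOp γ ((lap γ)^[0] (tension γ)) t = _
    rw [Function.iterate_zero, id]
    show -(cov γ (cov γ (tension γ)) t) -
        (tension γ t - ⟪tension γ t, deriv γ t⟫ • deriv γ t) = _
    rw [hcovW t, htension t, ← he_one]
    rw [show ⟪κ 1 t • e 2 t, e 1 t⟫ = 0 by
      rw [real_inner_smul_left, hon 2 1 (by omega) (by omega) (by omega) (by omega) t]
      norm_num]
    rw [zero_smul, sub_zero]
    match_scalars <;> ring
  -- pointwise characterization
  have hext : ∀ t, tauK 2 γ t = 0 ↔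
      (κ 1 t * deriv (κ 1) t = 0 ∧
       κ 1 t ^ 3 + κ 1 t * κ 2 t ^ 2 - deriv (deriv (κ 1)) t - κ 1 t = 0 ∧
       2 * deriv (κ 1) t * κ 2 t + κ 1 t * deriv (κ 2) t = 0 ∧
       κ 1 t * κ 2 t * κ 3 t = 0) := by
    intro t
    rw [htau t]
    have o := fun i j hi1 hi2 hj1 hj2 => hon i j hi1 hi2 hj1 hj2 t
    constructor
    · intro h
      have key : ∀ j, 1 ≤ j → j ≤ 4 →
          (3 * κ 1 t * deriv (κ 1) t) * ⟪e 1 t, e j t⟫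
          + (κ 1 t ^ 3 + κ 1 t * κ 2 t ^ 2 - deriv (deriv (κ 1)) t - κ 1 t) * ⟪e 2 t, e j t⟫
          + (-(2 * deriv (κ 1) t * κ 2 t + κ 1 t * deriv (κ 2) t)) * ⟪e 3 t, e j t⟫
          + (-(κ 1 t * κ 2 t * κ 3 t)) * ⟪e 4 t, e j t⟫ = 0 := by
        intro j hj1 hj2
        have := congrArg (fun v => ⟪v, e j t⟫) h
        simp only [inner_add_left, real_inner_smul_left, inner_zero_left] at this
        exact this
      have k1 := key 1 (by omega) (by omega)
      have k2 := key 2 (by omega) (by omega)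
      have k3 := key 3 (by omega) (by omega)
      have k4 := key 4 (by omega) (by omega)
      rw [o 1 1 (by omega) (by omega) (by omega) (by omega),
          o 2 1 (by omega) (by omega) (by omega) (by omega),
          o 3 1 (by omega) (by omega) (by omega) (by omega),
          o 4 1 (by omega) (by omega) (by omega) (by omega)] at k1
      rw [o 1 2 (by omega) (by omega) (by omega) (by omega),
          o 2 2 (by omega) (by omega) (by omega) (by omega),
          o 3 2 (by omega) (by omega) (by omega) (by omega),
          o 4 2 (by omega) (by omega) (by omega) (by omega)] at k2
      rw [o 1 3 (by omega) (by omega) (by omega) (by omega),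
          o 2 3 (by omega) (by omega) (by omega) (by omega),
          o 3 3 (by omega) (by omega) (by omega) (by omega),
          o 4 3 (by omega) (by omega) (by omega) (by omega)] at k3
      rw [o 1 4 (by omega) (by omega) (by omega) (by omega),
          o 2 4 (by omega) (by omega) (by omega) (by omega),
          o 3 4 (by omega) (by omega) (by omega) (by omega),
          o 4 4 (by omega) (by omega) (by omega) (by omega)] at k4
      norm_num at k1 k2 k3 k4
      refine ⟨?_, ?_, ?_, ?_⟩
      · exact mul_eq_zero.mpr k1
      · first | linear_combination k2 | linear_combination -k2 | linarith
      · first | linear_combination k3 | linear_combination -k3 | linarith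
      · exact mul_eq_zero.mpr (k4.imp mul_eq_zero.mpr id)
    · rintro ⟨h1, h2, h3, h4⟩
      have e1 : 3 * κ 1 t * deriv (κ 1) t = 0 := by linear_combination 3 * h1
      rw [e1, h2, h3, h4]
      simp
  constructor
  · intro h
    have hd1 : ∀ t, deriv (κ 1) t = 0 := by
      intro t
      rcases mul_eq_zero.mp ((hext t).mp (h t)).1 with h' | h'
      · exact absurd h' (hκ1 t)
      · exact h'
    have hdd1 : ∀ t, deriv (deriv (κ 1)) t = 0 := by
      have : deriv (κ 1) = fun _ => (0:ℝ) := funext hd1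
      intro t; rw [this]; exact deriv_const t 0
    have hc1 : ∀ s t, κ 1 s = κ 1 t := fun s t => is_const_of_deriv_eq_zero hκ1d hd1 s t
    have hd2 : ∀ t, deriv (κ 2) t = 0 := by
      intro t
      have hc := ((hext t).mp (h t)).2.2.1
      rw [hd1 t] at hc
      have : κ 1 t * deriv (κ 2) t = 0 := by linarith
      rcases mul_eq_zero.mp this with h' | h'
      · exact absurd h' (hκ1 t)
      · exact h'
    have hc2 : ∀ s t, κ 2 s = κ 2 t := fun s t => is_const_of_deriv_eq_zero hκ2d hd2 s t
    have hb : ∀ t, (κ 1 t)^2 + (κ 2 t)^2 = 1 := by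
      intro t
      have hb' := ((hext t).mp (h t)).2.1
      rw [hdd1 t] at hb'
      have key : κ 1 t * ((κ 1 t)^2 + (κ 2 t)^2 - 1) = 0 := by linear_combination hb'
      rcases mul_eq_zero.mp key with h' | h'
      · exact absurd h' (hκ1 t)
      · linarith
    have hd : ∀ t, κ 2 t * κ 3 t = 0 := by
      intro t
      have h4 := ((hext t).mp (h t)).2.2.2
      have : κ 1 t * (κ 2 t * κ 3 t) = 0 := by linear_combination h4
      rcases mul_eq_zero.mp this with h' | h'
      · exact absurd h' (hκ1 t)
      · exact h'
    exact ⟨hc1, hc2, hb, hd⟩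
  · rintro ⟨hc1, hc2, hb, hd⟩ t
    have hd1 : ∀ s, deriv (κ 1) s = 0 := by
      have : κ 1 = fun _ => κ 1 0 := funext fun s => hc1 s 0
      intro s; rw [this]; exact deriv_const s (κ 1 0)
    have hd2 : ∀ s, deriv (κ 2) s = 0 := by
      have : κ 2 = fun _ => κ 2 0 := funext fun s => hc2 s 0
      intro s; rw [this]; exact deriv_const s (κ 2 0)
    have hdd1 : ∀ s, deriv (deriv (κ 1)) s = 0 := by
      have : deriv (κ 1) = fun _ => (0:ℝ) := funext hd1
      intro s; rw [this]; exact deriv_const s 0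
    refine (hext t).mpr ⟨by rw [hd1 t]; ring, ?_, by rw [hd1 t, hd2 t]; ring, ?_⟩
    · rw [hdd1 t]; linear_combination κ 1 t * hb t
    · linear_combination κ 1 t * hd t
end
end

section
/- Suppose γ admits a Frenet system e₁, …, e_m of length m ≥ 6 with curvatures κ₁, …, κ_{m−1}. Then the fourth iterated covariant derivative of the tension field satisfies ∇⁴(κ₁e₂) = (−10κ₁′κ₁″ − 5κ₁κ₁‴ + 10κ₁³κ₁′ + 5κ₁κ₁′κ₂² + 5κ₁²κ₂κ₂′) e₁ + (−15κ₁(κ₁′)² − 10κ₁²κ₁″ + κ₁⁵ + 2κ₁³κ₂² + κ₁⁽⁴⁾ − 6κ₁″κ₂² − 12κ₁′κ₂κ₂′ − 3κ₁(κ₂′)² − 4κ₁κ₂κ₂″ + κ₁κ₂⁴ + κ₁κ₂²κ₃²) e₂ + (4κ₁‴κ₂ − 9κ₁²κ₁′κ₂ − 4κ₁′κ₂³ − 6κ₁κ₂²κ₂′ + 6κ₁″κ₂′ − κ₁³κ₂′ + 4κ₁′κ₂″ + κ₁κ₂‴ − 4κ₁′κ₂κ₃² − 3κ₁κ₂′κ₃²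 − 3κ₁κ₂κ₃κ₃′) e₃ + (6κ₁″κ₂κ₃ − κ₁³κ₂κ₃ − κ₁κ₂³κ₃ + 8κ₁′κ₂′κ₃ + 3κ₁κ₂″κ₃ − κ₁κ₂κ₃³ + 4κ₁′κ₂κ₃′ + 3κ₁κ₂′κ₃′ + κ₁κ₂κ₃″ − κ₁κ₂κ₃κ₄²) e₄ + (4κ₁′κ₂κ₃κ₄ + 3κ₁κ₂′κ₃κ₄ + 2κ₁κ₂κ₃′κ₄ + κ₁κ₂κ₃κ₄′) e₅ + κ₁κ₂κ₃κ₄κ₅ e₆. -/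
open scoped RealInnerProductSpace

noncomputable section

theorem stmt_5 (n : ℕ) (hn : 2 ≤ n) (γ : ℝ → EuclideanSpace ℝ (Fin (n+1)))
    (hγ : ContDiff ℝ (⊤ : ℕ∞) γ)
    (hsph : ∀ t, ⟪γ t, γ t⟫ = 1)
    (harc : ∀ t, ⟪deriv γ t, deriv γ t⟫ = 1)
    (m : ℕ) (hm : 6 ≤ m)
    (e : ℕ → ℝ → EuclideanSpace ℝ (Fin (n+1))) (κ : ℕ → ℝ → ℝ)
    (he_smooth : ∀ i, 1 ≤ i → i ≤ m → ContDiff ℝ (⊤ : ℕ∞) (e i))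
    (hκ_smooth : ∀ i, 1 ≤ i → i ≤ m - 1 → ContDiff ℝ (⊤ : ℕ∞) (κ i))
    (he_tangent : ∀ i, 1 ≤ i → i ≤ m → ∀ t, ⟪e i t, γ t⟫ = 0)
    (he_orthonormal : ∀ i j, 1 ≤ i → i ≤ m → 1 ≤ j → j ≤ m → ∀ t,
      ⟪e i t, e j t⟫ = if i = j then (1 : ℝ) else 0)
    (he_one : e 1 = deriv γ)
    (hFrenet_one : ∀ t, cov γ (e 1) t = κ 1 t • e 2 t)
    (hFrenet : ∀ i, 2 ≤ i → i ≤ m - 1 → ∀ t,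
      cov γ (e i) t = -(κ (i-1) t) • e (i-1) t + κ i t • e (i+1) t) :
    ∀ t, (cov γ)^[4] (fun s => κ 1 s • e 2 s) t =
      (-10 * (deriv (κ 1) t) * (iteratedDeriv 2 (κ 1) t) - 5 * κ 1 t * (iteratedDeriv 3 (κ 1) t) + 10 * (κ 1 t)^3 * (deriv (κ 1) t) + 5 * κ 1 t * (deriv (κ 1) t) * (κ 2 t)^2 + 5 * (κ 1 t)^2 * κ 2 t * (deriv (κ 2) t)) • e 1 t
      + (-15 * κ 1 t * (deriv (κ 1) t)^2 - 10 * (κ 1 t)^2 * (iteratedDeriv 2 (κ 1) t) + (κ 1 t)^5 + 2 * (κ 1 t)^3 * (κ 2 t)^2 + (iteratedDeriv 4 (κ 1) t) - 6 * (iteratedDeriv 2 (κ 1) t) * (κ 2 t)^2 - 12 * (deriv (κ 1) t) * κ 2 t * (deriv (κ 2) t) - 3 * κ 1 t * (deriv (κ 2) t)^2 - 4 * κ 1 t * κ 2 t * (iteratedDeriv 2 (κ 2) t) + κ 1 t * (κ 2 t)^4 + κ 1 t * (κ 2 t)^2 * (κ 3 t)^2) • e 2 t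
      + (4 * (iteratedDeriv 3 (κ 1) t) * κ 2 t - 9 * (κ 1 t)^2 * (deriv (κ 1) t) * κ 2 t - 4 * (deriv (κ 1) t) * (κ 2 t)^3 - 6 * κ 1 t * (κ 2 t)^2 * (deriv (κ 2) t) + 6 * (iteratedDeriv 2 (κ 1) t) * (deriv (κ 2) t) - (κ 1 t)^3 * (deriv (κ 2) t) + 4 * (deriv (κ 1) t) * (iteratedDeriv 2 (κ 2) t) + κ 1 t * (iteratedDeriv 3 (κ 2) t) - 4 * (deriv (κ 1) t) * κ 2 t * (κ 3 t)^2 - 3 * κ 1 t * (deriv (κ 2) t) * (κ 3 t)^2 - 3 * κ 1 t * κ 2 t * κ 3 t * (deriv (κ 3) t)) • e 3 t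
      + (6 * (iteratedDeriv 2 (κ 1) t) * κ 2 t * κ 3 t - (κ 1 t)^3 * κ 2 t * κ 3 t - κ 1 t * (κ 2 t)^3 * κ 3 t + 8 * (deriv (κ 1) t) * (deriv (κ 2) t) * κ 3 t + 3 * κ 1 t * (iteratedDeriv 2 (κ 2) t) * κ 3 t - κ 1 t * κ 2 t * (κ 3 t)^3 + 4 * (deriv (κ 1) t) * κ 2 t * (deriv (κ 3) t) + 3 * κ 1 t * (deriv (κ 2) t) * (deriv (κ 3) t) + κ 1 t * κ 2 t * (iteratedDeriv 2 (κ 3) t) - κ 1 t * κ 2 t * κ 3 t * (κ 4 t)^2) • e 4 t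
      + (4 * (deriv (κ 1) t) * κ 2 t * κ 3 t * κ 4 t + 3 * κ 1 t * (deriv (κ 2) t) * κ 3 t * κ 4 t + 2 * κ 1 t * κ 2 t * (deriv (κ 3) t) * κ 4 t + κ 1 t * κ 2 t * κ 3 t * (deriv (κ 4) t)) • e 5 t
      + (κ 1 t * κ 2 t * κ 3 t * κ 4 t * κ 5 t) • e 6 t := by
  have hγd : Differentiable ℝ γ := hγ.differentiable (by simp)
  have heD : ∀ i, 1 ≤ i → i ≤ m → Differentiable ℝ (e i) := fun i hi1 him =>
    (he_smooth i hi1 him).differentiable (by simp)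
  -- The master step lemma: covariant derivative of a combination of the first five
  -- Frenet frame fields.
  have step : ∀ (W : ℝ → EuclideanSpace ℝ (Fin (n+1))) (a₁ a₂ a₃ a₄ a₅ : ℝ → ℝ),
      Differentiable ℝ a₁ → Differentiable ℝ a₂ → Differentiable ℝ a₃ →
      Differentiable ℝ a₄ → Differentiable ℝ a₅ →
      (∀ s, W s = a₁ s • e 1 s + a₂ s • e 2 s + a₃ s • e 3 s + a₄ s • e 4 s + a₅ s • e 5 s) →
      ∀ u, cov γ W u =
      (deriv a₁ u - a₂ u * κ 1 u) • e 1 u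
      + (deriv a₂ u + a₁ u * κ 1 u - a₃ u * κ 2 u) • e 2 u
      + (deriv a₃ u + a₂ u * κ 2 u - a₄ u * κ 3 u) • e 3 u
      + (deriv a₄ u + a₃ u * κ 3 u - a₅ u * κ 4 u) • e 4 u
      + (deriv a₅ u + a₄ u * κ 4 u) • e 5 u
      + (a₅ u * κ 5 u) • e 6 u := by
    intro W a₁ a₂ a₃ a₄ a₅ h1 h2 h3 h4 h5 hpt u
    have hWe : W = fun s => a₁ s • e 1 s + a₂ s • e 2 s + a₃ s • e 3 s + a₄ s • e 4 s + a₅ s • e 5 s :=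
      funext hpt
    subst hWe
    have htan' : ∀ i, 1 ≤ i → i ≤ m → ⟪deriv (e i) u, γ u⟫ = -⟪e i u, e 1 u⟫ := by
      intro i hi1 him
      have hD := ((heD i hi1 him u).hasDerivAt.inner ℝ (hγd u).hasDerivAt)
      have hconst : (fun s => ⟪e i s, γ s⟫) = fun _ => (0:ℝ) :=
        funext fun s => he_tangent i hi1 him s
      rw [hconst] at hD
      have h0 := hD.unique (hasDerivAt_const u 0)
      rw [he_one]
      linarith
    have hcov_eq : ∀ i, 1 ≤ i → i ≤ m →
        deriv (e i) u = cov γ (e i) u + ⟪deriv (e i) u, γ u⟫ • γ u := by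
      intro i hi1 him; simp [cov]
    have hde1 : deriv (e 1) u = κ 1 u • e 2 u - γ u := by
      have h := hcov_eq 1 (by omega) (by omega)
      rw [htan' 1 (by omega) (by omega),
        he_orthonormal 1 1 (by omega) (by omega) (by omega) (by omega),
        hFrenet_one u] at h
      simp at h
      rw [h]; module
    have hde : ∀ i, 2 ≤ i → i ≤ 5 →
        deriv (e i) u = -(κ (i-1) u) • e (i-1) u + κ i u • e (i+1) u := by
      intro i hi2 hi5
      have h := hcov_eq i (by omega) (by omega)
      rw [htan' i (by omega) (by omega),
        he_orthonormal i 1 (by omega) (by omega) (by omega) (by omega),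
        hFrenet i hi2 (by omega) u] at h
      simp only [if_neg (by omega : ¬ i = 1), neg_zero, zero_smul, add_zero] at h
      rw [h]
    have hde2 : deriv (e 2) u = -κ 1 u • e 1 u + κ 2 u • e 3 u := by
      simpa using hde 2 (by omega) (by omega)
    have hde3 : deriv (e 3) u = -κ 2 u • e 2 u + κ 3 u • e 4 u := by
      simpa using hde 3 (by omega) (by omega)
    have hde4 : deriv (e 4) u = -κ 3 u • e 3 u + κ 4 u • e 5 u := by
      simpa using hde 4 (by omega) (by omega)
    have hde5 : deriv (e 5) u = -κ 4 u • e 4 u + κ 5 u • e 6 u := by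
      simpa using hde 5 (by omega) (by omega)
    have hW := ((((((h1 u).hasDerivAt.smul (heD 1 (by omega) (by omega) u).hasDerivAt).add
        ((h2 u).hasDerivAt.smul (heD 2 (by omega) (by omega) u).hasDerivAt)).add
        ((h3 u).hasDerivAt.smul (heD 3 (by omega) (by omega) u).hasDerivAt)).add
        ((h4 u).hasDerivAt.smul (heD 4 (by omega) (by omega) u).hasDerivAt)).add
        ((h5 u).hasDerivAt.smul (heD 5 (by omega) (by omega) u).hasDerivAt))
    have hWd := hW.deriv
    have hin : ⟪deriv (fun s => a₁ s • e 1 s + a₂ s • e 2 s + a₃ s • e 3 s + a₄ s • e 4 s + a₅ s • e 5 s) u, γ u⟫ = -(a₁ u) := by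
      erw [hWd, hde1, hde2, hde3, hde4, hde5]
      have ht : ∀ j, 1 ≤ j → j ≤ 6 → ⟪e j u, γ u⟫ = 0 := fun j hj1 hj6 =>
        he_tangent j hj1 (by omega) u
      simp only [inner_add_left, inner_sub_left, real_inner_smul_left,
        ht 1 (by omega) (by omega), ht 2 (by omega) (by omega),
        ht 3 (by omega) (by omega), ht 4 (by omega) (by omega), ht 5 (by omega) (by omega),
        ht 6 (by omega) (by omega), hsph u]
      ring
    have hcovW : cov γ (fun s => a₁ s • e 1 s + a₂ s • e 2 s + a₃ s • e 3 s + a₄ s • e 4 s + a₅ s • e 5 s) u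
        = deriv (fun s => a₁ s • e 1 s + a₂ s • e 2 s + a₃ s • e 3 s + a₄ s • e 4 s + a₅ s • e 5 s) u
          - ⟪deriv (fun s => a₁ s • e 1 s + a₂ s • e 2 s + a₃ s • e 3 s + a₄ s • e 4 s + a₅ s • e 5 s) u, γ u⟫ • γ u := rfl
    erw [hcovW, hin, hWd, hde1, hde2, hde3, hde4, hde5]
    module
  -- smoothness of the curvatures and their derivatives
  have hsm : ∀ f : ℝ → ℝ, ContDiff ℝ (⊤:ℕ∞) f → ContDiff ℝ (⊤:ℕ∞) (deriv f) :=
    fun f hf => (contDiff_infty_iff_deriv.mp hf).2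
  have hs1 : ContDiff ℝ (⊤:ℕ∞) (κ 1) := (hκ_smooth 1 (by omega) (by omega)).of_le (by simp)
  have hs2 : ContDiff ℝ (⊤:ℕ∞) (κ 2) := (hκ_smooth 2 (by omega) (by omega)).of_le (by simp)
  have hs3 : ContDiff ℝ (⊤:ℕ∞) (κ 3) := (hκ_smooth 3 (by omega) (by omega)).of_le (by simp)
  have hs4 : ContDiff ℝ (⊤:ℕ∞) (κ 4) := (hκ_smooth 4 (by omega) (by omega)).of_le (by simp)
  have hs1' := hsm _ hs1
  have hs1'' := hsm _ hs1'
  have hs1''' := hsm _ hs1''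
  have hs2' := hsm _ hs2
  have hs2'' := hsm _ hs2'
  have hs3' := hsm _ hs3
  have dk1 : Differentiable ℝ (κ 1) := hs1.differentiable (by simp)
  have dk1' : Differentiable ℝ (deriv (κ 1)) := hs1'.differentiable (by simp)
  have dk1'' : Differentiable ℝ (deriv (deriv (κ 1))) := hs1''.differentiable (by simp)
  have dk1''' : Differentiable ℝ (deriv (deriv (deriv (κ 1)))) := hs1'''.differentiable (by simp)
  have dk2 : Differentiable ℝ (κ 2) := hs2.differentiable (by simp)
  have dk2' : Differentiable ℝ (deriv (κ 2)) := hs2'.differentiable (by simp)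
  have dk2'' : Differentiable ℝ (deriv (deriv (κ 2))) := hs2''.differentiable (by simp)
  have dk3 : Differentiable ℝ (κ 3) := hs3.differentiable (by simp)
  have dk3' : Differentiable ℝ (deriv (κ 3)) := hs3'.differentiable (by simp)
  have dk4 : Differentiable ℝ (κ 4) := hs4.differentiable (by simp)
  -- HasDerivAt atoms
  have H1 : ∀ u, HasDerivAt (κ 1) (deriv (κ 1) u) u := fun u => (dk1 u).hasDerivAt
  have H1' : ∀ u, HasDerivAt (deriv (κ 1)) (deriv (deriv (κ 1)) u) u := fun u => (dk1' u).hasDerivAt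
  have H1'' : ∀ u, HasDerivAt (deriv (deriv (κ 1))) (deriv (deriv (deriv (κ 1))) u) u :=
    fun u => (dk1'' u).hasDerivAt
  have H1''' : ∀ u, HasDerivAt (deriv (deriv (deriv (κ 1)))) (deriv (deriv (deriv (deriv (κ 1)))) u) u :=
    fun u => (dk1''' u).hasDerivAt
  have H2 : ∀ u, HasDerivAt (κ 2) (deriv (κ 2) u) u := fun u => (dk2 u).hasDerivAt
  have H2' : ∀ u, HasDerivAt (deriv (κ 2)) (deriv (deriv (κ 2)) u) u := fun u => (dk2' u).hasDerivAt
  have H2'' : ∀ u, HasDerivAt (deriv (deriv (κ 2))) (deriv (deriv (deriv (κ 2))) u) u :=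
    fun u => (dk2'' u).hasDerivAt
  have H3 : ∀ u, HasDerivAt (κ 3) (deriv (κ 3) u) u := fun u => (dk3 u).hasDerivAt
  have H3' : ∀ u, HasDerivAt (deriv (κ 3)) (deriv (deriv (κ 3)) u) u := fun u => (dk3' u).hasDerivAt
  have H4 : ∀ u, HasDerivAt (κ 4) (deriv (κ 4) u) u := fun u => (dk4 u).hasDerivAt
  -- derivative facts for coefficient functions
  have hb1d := fun u : ℝ => (((H1 u).mul (H1 u)).neg).deriv
  have hb3d := fun u : ℝ => ((H1 u).mul (H2 u)).deriv
  have hc1d := fun u : ℝ => ((((H1 u).mul (H1' u)).const_mul (3:ℝ)).neg).deriv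
  have hc2d := fun u : ℝ =>
    (((H1'' u).sub (((H1 u).mul (H1 u)).mul (H1 u))).sub ((H1 u).mul ((H2 u).mul (H2 u)))).deriv
  have hc3d := fun u : ℝ =>
    ((((H1' u).mul (H2 u)).const_mul (2:ℝ)).add ((H1 u).mul (H2' u))).deriv
  have hc4d := fun u : ℝ => (((H1 u).mul (H2 u)).mul (H3 u)).deriv
  have hd1d := fun u : ℝ =>
    ((((((H1' u).mul (H1' u)).const_mul (3:ℝ)).neg).sub
        (((H1 u).mul (H1'' u)).const_mul (4:ℝ))).add
        (((H1 u).mul (H1 u)).mul ((H1 u).mul (H1 u)))).add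
        (((H1 u).mul (H1 u)).mul ((H2 u).mul (H2 u))) |>.deriv
  have hd2d := fun u : ℝ =>
    ((((H1''' u).sub ((((H1 u).mul (H1 u)).mul (H1' u)).const_mul (6:ℝ))).sub
        (((H1' u).mul ((H2 u).mul (H2 u))).const_mul (3:ℝ))).sub
        (((H1 u).mul ((H2 u).mul (H2' u))).const_mul (3:ℝ))).deriv
  have hd3d := fun u : ℝ =>
    (((((((H1'' u).mul (H2 u)).const_mul (3:ℝ)).sub
        ((((H1 u).mul (H1 u)).mul (H1 u)).mul (H2 u))).sub
        ((H1 u).mul (((H2 u).mul (H2 u)).mul (H2 u)))).add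
        (((H1' u).mul (H2' u)).const_mul (3:ℝ))).add
        ((H1 u).mul (H2'' u))).sub
        (((H1 u).mul (H2 u)).mul ((H3 u).mul (H3 u))) |>.deriv
  have hd4d := fun u : ℝ =>
    (((((H1' u).mul (H2 u)).mul (H3 u)).const_mul (3:ℝ)).add
        ((((H1 u).mul (H2' u)).mul (H3 u)).const_mul (2:ℝ))).add
        (((H1 u).mul (H2 u)).mul (H3' u)) |>.deriv
  have hd5d := fun u : ℝ => ((((H1 u).mul (H2 u)).mul (H3 u)).mul (H4 u)).deriv
  -- Stage 1
  have hW1 : cov γ (fun s => κ 1 s • e 2 s)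
      = fun s => (-(κ 1 s * κ 1 s)) • e 1 s + deriv (κ 1) s • e 2 s + (κ 1 s * κ 2 s) • e 3 s := by
    funext u
    rw [step (fun s => κ 1 s • e 2 s) (fun _ => (0:ℝ)) (κ 1) (fun _ => (0:ℝ)) (fun _ => (0:ℝ))
      (fun _ => (0:ℝ)) (differentiable_const 0) dk1 (differentiable_const 0)
      (differentiable_const 0) (differentiable_const 0) (fun s => by simp) u]
    simp only [deriv_const']
    module
  -- Stage 2
  have hW2 : cov γ (fun s => (-(κ 1 s * κ 1 s)) • e 1 s + deriv (κ 1) s • e 2 s + (κ 1 s * κ 2 s) • e 3 s)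
      = fun s => (-(3 * (κ 1 s * deriv (κ 1) s))) • e 1 s
        + (deriv (deriv (κ 1)) s - κ 1 s * κ 1 s * κ 1 s - κ 1 s * (κ 2 s * κ 2 s)) • e 2 s
        + (2 * (deriv (κ 1) s * κ 2 s) + κ 1 s * deriv (κ 2) s) • e 3 s
        + (κ 1 s * κ 2 s * κ 3 s) • e 4 s := by
    funext u
    rw [step _ (fun s => -(κ 1 s * κ 1 s)) (deriv (κ 1)) (fun s => κ 1 s * κ 2 s)
      (fun _ => (0:ℝ)) (fun _ => (0:ℝ))
      ((dk1.mul dk1).neg) dk1' (dk1.mul dk2) (differentiable_const 0) (differentiable_const 0)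
      (fun s => by simp) u]
    erw [hb1d u, hb3d u]
    simp only [deriv_const']
    module
  -- Stage 3
  have hW3 : cov γ (fun s => (-(3 * (κ 1 s * deriv (κ 1) s))) • e 1 s
        + (deriv (deriv (κ 1)) s - κ 1 s * κ 1 s * κ 1 s - κ 1 s * (κ 2 s * κ 2 s)) • e 2 s
        + (2 * (deriv (κ 1) s * κ 2 s) + κ 1 s * deriv (κ 2) s) • e 3 s
        + (κ 1 s * κ 2 s * κ 3 s) • e 4 s)
      = fun s => (-(3 * (deriv (κ 1) s * deriv (κ 1) s)) - 4 * (κ 1 s * deriv (deriv (κ 1)) s)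
            + κ 1 s * κ 1 s * (κ 1 s * κ 1 s) + κ 1 s * κ 1 s * (κ 2 s * κ 2 s)) • e 1 s
        + (deriv (deriv (deriv (κ 1))) s - 6 * (κ 1 s * κ 1 s * deriv (κ 1) s)
            - 3 * (deriv (κ 1) s * (κ 2 s * κ 2 s)) - 3 * (κ 1 s * (κ 2 s * deriv (κ 2) s))) • e 2 s
        + (3 * (deriv (deriv (κ 1)) s * κ 2 s) - κ 1 s * κ 1 s * κ 1 s * κ 2 s
            - κ 1 s * (κ 2 s * κ 2 s * κ 2 s) + 3 * (deriv (κ 1) s * deriv (κ 2) s)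
            + κ 1 s * deriv (deriv (κ 2)) s - κ 1 s * κ 2 s * (κ 3 s * κ 3 s)) • e 3 s
        + (3 * (deriv (κ 1) s * κ 2 s * κ 3 s) + 2 * (κ 1 s * deriv (κ 2) s * κ 3 s)
            + κ 1 s * κ 2 s * deriv (κ 3) s) • e 4 s
        + (κ 1 s * κ 2 s * κ 3 s * κ 4 s) • e 5 s := by
    funext u
    rw [step _ (fun s => -(3 * (κ 1 s * deriv (κ 1) s)))
      (fun s => deriv (deriv (κ 1)) s - κ 1 s * κ 1 s * κ 1 s - κ 1 s * (κ 2 s * κ 2 s))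
      (fun s => 2 * (deriv (κ 1) s * κ 2 s) + κ 1 s * deriv (κ 2) s)
      (fun s => κ 1 s * κ 2 s * κ 3 s) (fun _ => (0:ℝ))
      (((dk1.mul dk1').const_mul 3).neg)
      ((dk1''.sub ((dk1.mul dk1).mul dk1)).sub (dk1.mul (dk2.mul dk2)))
      (((dk1'.mul dk2).const_mul 2).add (dk1.mul dk2'))
      ((dk1.mul dk2).mul dk3) (differentiable_const 0)
      (fun s => by simp) u]
    erw [hc1d u, hc2d u, hc3d u, hc4d u]
    simp only [deriv_const', Pi.mul_apply]
    module
  -- main computation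
  intro t
  have hit4 : (cov γ)^[4] (fun s => κ 1 s • e 2 s)
      = cov γ (cov γ (cov γ (cov γ (fun s => κ 1 s • e 2 s)))) := rfl
  rw [hit4, hW1, hW2, hW3]
  rw [step _
    (fun s => -(3 * (deriv (κ 1) s * deriv (κ 1) s)) - 4 * (κ 1 s * deriv (deriv (κ 1)) s)
        + κ 1 s * κ 1 s * (κ 1 s * κ 1 s) + κ 1 s * κ 1 s * (κ 2 s * κ 2 s))
    (fun s => deriv (deriv (deriv (κ 1))) s - 6 * (κ 1 s * κ 1 s * deriv (κ 1) s)
        - 3 * (deriv (κ 1) s * (κ 2 s * κ 2 s)) - 3 * (κ 1 s * (κ 2 s * deriv (κ 2) s)))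
    (fun s => 3 * (deriv (deriv (κ 1)) s * κ 2 s) - κ 1 s * κ 1 s * κ 1 s * κ 2 s
        - κ 1 s * (κ 2 s * κ 2 s * κ 2 s) + 3 * (deriv (κ 1) s * deriv (κ 2) s)
        + κ 1 s * deriv (deriv (κ 2)) s - κ 1 s * κ 2 s * (κ 3 s * κ 3 s))
    (fun s => 3 * (deriv (κ 1) s * κ 2 s * κ 3 s) + 2 * (κ 1 s * deriv (κ 2) s * κ 3 s)
        + κ 1 s * κ 2 s * deriv (κ 3) s)
    (fun s => κ 1 s * κ 2 s * κ 3 s * κ 4 s)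
    (((((dk1'.mul dk1').const_mul 3).neg.sub ((dk1.mul dk1'').const_mul 4)).add
        ((dk1.mul dk1).mul (dk1.mul dk1))).add ((dk1.mul dk1).mul (dk2.mul dk2)))
    (((dk1'''.sub (((dk1.mul dk1).mul dk1').const_mul 6)).sub
        ((dk1'.mul (dk2.mul dk2)).const_mul 3)).sub ((dk1.mul (dk2.mul dk2')).const_mul 3))
    ((((((dk1''.mul dk2).const_mul 3).sub (((dk1.mul dk1).mul dk1).mul dk2)).sub
        (dk1.mul ((dk2.mul dk2).mul dk2))).add ((dk1'.mul dk2').const_mul 3)).add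
        (dk1.mul dk2'') |>.sub ((dk1.mul dk2).mul (dk3.mul dk3)))
    (((((dk1'.mul dk2).mul dk3).const_mul 3).add (((dk1.mul dk2').mul dk3).const_mul 2)).add
        ((dk1.mul dk2).mul dk3'))
    (((dk1.mul dk2).mul dk3).mul dk4)
    (fun s => rfl) t]
  erw [hd1d t, hd2d t, hd3d t, hd4d t, hd5d t]
  have ii2 : ∀ f : ℝ → ℝ, iteratedDeriv 2 f = deriv (deriv f) := by
    intro f
    rw [show (2:ℕ) = 1 + 1 from rfl, iteratedDeriv_succ, iteratedDeriv_one]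
  have ii3 : ∀ f : ℝ → ℝ, iteratedDeriv 3 f = deriv (deriv (deriv f)) := by
    intro f
    rw [show (3:ℕ) = 2 + 1 from rfl, iteratedDeriv_succ, ii2]
  have ii4 : ∀ f : ℝ → ℝ, iteratedDeriv 4 f = deriv (deriv (deriv (deriv f))) := by
    intro f
    rw [show (4:ℕ) = 3 + 1 from rfl, iteratedDeriv_succ, ii3]
  simp only [ii2, ii3, ii4, Pi.mul_apply, Pi.add_apply, Pi.sub_apply, Pi.neg_apply]
  module
end
end

section
/- Suppose γ admits a Frenet system e₁, …, e_m of length m ≥ 6 with curvatures κ₁, …, κ_{m−1}. Then γ is 3-harmonic (τ₃(γ) ≡ 0) if and only if the following six identities hold identically on ℝ: (1) −2κ₁′κ₁″ − κ₁κ₁‴ + 2κ₁³κ₁′ + κ₁κ₁′κ₂² + κ₁²κ₂κ₂′ = 0; (2) −15κ₁(κ₁′)² − 10κ₁²κ₁″ + κ₁⁵ + 2κ₁³κ₂² + κ₁⁽⁴⁾ − 6κ₁″κ₂² − 12κ₁′κ₂κ₂′ − 3κ₁(κ₂′)² − 4κ₁κ₂κ₂″ + κ₁κ₂⁴ + κ₁κ₂²κ₃²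 + (κ₁″ − κ₁³ − κ₁κ₂²) = 0; (3) 4κ₁‴κ₂ − 9κ₁²κ₁′κ₂ − 4κ₁′κ₂³ − 6κ₁κ₂²κ₂′ + 6κ₁″κ₂′ − κ₁³κ₂′ + 4κ₁′κ₂″ + κ₁κ₂‴ − 4κ₁′κ₂κ₃² − 3κ₁κ₂′κ₃² − 3κ₁κ₂κ₃κ₃′ + (2κ₁′κ₂ + κ₁κ₂′) = 0; (4) 6κ₁″κ₂κ₃ − κ₁³κ₂κ₃ − κ₁κ₂³κ₃ + 8κ₁′κ₂′κ₃ + 3κ₁κ₂″κ₃ − κ₁κ₂κ₃³ + 4κ₁′κ₂κ₃′ + 3κ₁κ₂′κ₃′ + κ₁κ₂κ₃″ − κ₁κ₂κ₃κ₄² + κ₁κ₂κ₃ = 0; (5) 4κ₁′κ₂κ₃κ₄ + 3κ₁κ₂′κ₃κ₄ + 2κ₁κ₂κ₃′κ₄ + κ₁κ₂κ₃κ₄′ = 0; (6) κ₁κ₂κ₃κ₄κ₅ = 0. -/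
open scoped RealInnerProductSpace

noncomputable section

open scoped ContDiff

namespace Stmt6Aux

inductive E : Type where
  | C : ℝ → E
  | A : Fin 5 → ℕ → E
  | add : E → E → E
  | mul : E → E → E
  | neg : E → E

noncomputable def E.ev (κ : Fin 5 → ℝ → ℝ) : E → ℝ → ℝ
  | .C c => fun _ => c
  | .A i k => deriv^[k] (κ i)
  | .add a b => fun t => E.ev κ a t + E.ev κ b t
  | .mul a b => fun t => E.ev κ a t * E.ev κ b t
  | .neg a => fun t => -E.ev κ a t

def E.D : E → E
  | .C _ => .C 0
  | .A i k => .A i (k+1)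
  | .add a b => .add a.D b.D
  | .mul a b => .add (.mul a.D b) (.mul a b.D)
  | .neg a => .neg a.D

theorem E.hasDeriv {κ : Fin 5 → ℝ → ℝ} (hκ : ∀ i, ContDiff ℝ ∞ (κ i)) :
    ∀ (p : E) (t : ℝ), HasDerivAt (E.ev κ p) (E.ev κ p.D t) t := by
  have hsm : ∀ (i : Fin 5) (k : ℕ), ContDiff ℝ ∞ (deriv^[k] (κ i)) :=
    fun i k => (hκ i).iterate_deriv k
  intro p
  induction p with
  | C c => intro t; simpa [E.ev, E.D] using hasDerivAt_const t c
  | A i k =>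
      intro t
      have h : HasDerivAt (deriv^[k] (κ i)) (deriv (deriv^[k] (κ i)) t) t :=
        (((hsm i k).differentiable (by norm_num)) t).hasDerivAt
      simpa [E.ev, E.D, Function.iterate_succ_apply'] using h
  | add a b iha ihb => intro t; simp only [E.ev, E.D]; exact (iha t).add (ihb t)
  | mul a b iha ihb => intro t; simp only [E.ev, E.D]; exact (iha t).mul (ihb t)
  | neg a iha => intro t; simp only [E.ev, E.D]; exact (iha t).neg

def st1 (p1 p2 : E) : E := .add p1.D (.neg (.mul (.A 0 0) p2))
def st2 (p1 p2 p3 : E) : E := .add (.mul (.A 0 0) p1) (.add p2.D (.neg (.mul (.A 1 0) p3)))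
def st3 (p2 p3 p4 : E) : E := .add (.mul (.A 1 0) p2) (.add p3.D (.neg (.mul (.A 2 0) p4)))
def st4 (p3 p4 p5 : E) : E := .add (.mul (.A 2 0) p3) (.add p4.D (.neg (.mul (.A 3 0) p5)))
def st5 (p4 p5 : E) : E := .add (.mul (.A 3 0) p4) p5.D
def st6 (p5 : E) : E := .mul (.A 4 0) p5

noncomputable def ze : E := .C 0
noncomputable def ka : E := .A 0 0

noncomputable def q1 : E := st1 ze ka
noncomputable def q2 : E := st2 ze ka ze
noncomputable def q3 : E := st3 ka ze ze
noncomputable def q4 : E := st4 ze ze ze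
noncomputable def q5 : E := st5 ze ze

noncomputable def r1 : E := st1 q1 q2
noncomputable def r2 : E := st2 q1 q2 q3
noncomputable def r3 : E := st3 q2 q3 q4
noncomputable def r4 : E := st4 q3 q4 q5
noncomputable def r5 : E := st5 q4 q5

noncomputable def nr1 : E := E.neg r1
noncomputable def nr2 : E := E.neg r2
noncomputable def nr3 : E := E.neg r3
noncomputable def nr4 : E := E.neg r4
noncomputable def nr5 : E := E.neg r5

noncomputable def w1 : E := st1 nr1 nr2
noncomputable def w2 : E := st2 nr1 nr2 nr3
noncomputable def w3 : E := st3 nr2 nr3 nr4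
noncomputable def w4 : E := st4 nr3 nr4 nr5
noncomputable def w5 : E := st5 nr4 nr5

noncomputable def u1 : E := st1 w1 w2
noncomputable def u2 : E := st2 w1 w2 w3
noncomputable def u3 : E := st3 w2 w3 w4
noncomputable def u4 : E := st4 w3 w4 w5
noncomputable def u5 : E := st5 w4 w5
noncomputable def u6 : E := st6 w5

noncomputable def Q1 : E := E.neg u1
noncomputable def Q2 : E := E.add (E.neg u2) r2
noncomputable def Q3 : E := E.add (E.neg u3) r3
noncomputable def Q4 : E := E.add (E.neg u4) r4
noncomputable def Q5 : E := E.add (E.neg u5) r5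
noncomputable def Q6 : E := E.neg u6

def KP (κ : ℕ → ℝ → ℝ) : Fin 5 → ℝ → ℝ := fun i => κ (i.val + 1)

theorem KP0 (κ : ℕ → ℝ → ℝ) : KP κ 0 = κ 1 := rfl
theorem KP1 (κ : ℕ → ℝ → ℝ) : KP κ 1 = κ 2 := rfl
theorem KP2 (κ : ℕ → ℝ → ℝ) : KP κ 2 = κ 3 := rfl
theorem KP3 (κ : ℕ → ℝ → ℝ) : KP κ 3 = κ 4 := rfl
theorem KP4 (κ : ℕ → ℝ → ℝ) : KP κ 4 = κ 5 := rfl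

theorem cov_add {n : ℕ} (γ V W : ℝ → EuclideanSpace ℝ (Fin (n+1))) (t : ℝ)
    (hV : DifferentiableAt ℝ V t) (hW : DifferentiableAt ℝ W t) :
    cov γ (fun s => V s + W s) t = cov γ V t + cov γ W t := by
  have h : deriv (fun s => V s + W s) t = deriv V t + deriv W t := deriv_add hV hW
  simp only [cov, h, inner_add_left]
  module

theorem cov_smul {n : ℕ} (γ : ℝ → EuclideanSpace ℝ (Fin (n+1))) (f : ℝ → ℝ) (f' : ℝ)
    (V : ℝ → EuclideanSpace ℝ (Fin (n+1))) (t : ℝ)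
    (hf : HasDerivAt f f' t) (hV : DifferentiableAt ℝ V t) (hVγ : ⟪V t, γ t⟫ = 0) :
    cov γ (fun s => f s • V s) t = f' • V t + f t • cov γ V t := by
  have h : deriv (fun s => f s • V s) t = f t • deriv V t + f' • V t :=
    (hf.smul hV.hasDerivAt).deriv
  simp only [cov, h, inner_add_left, real_inner_smul_left, hVγ, mul_zero, add_zero]
  module

theorem cov_combo_fun {n : ℕ} (γ : ℝ → EuclideanSpace ℝ (Fin (n+1)))
    (κ' : Fin 5 → ℝ → ℝ) (e : ℕ → ℝ → EuclideanSpace ℝ (Fin (n+1)))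
    (hde : ∀ i, 1 ≤ i → i ≤ 5 → Differentiable ℝ (e i))
    (htan : ∀ i, 1 ≤ i → i ≤ 5 → ∀ t, ⟪e i t, γ t⟫ = 0)
    (hF1 : ∀ t, cov γ (e 1) t = κ' 0 t • e 2 t)
    (hF2 : ∀ t, cov γ (e 2) t = -(κ' 0 t) • e 1 t + κ' 1 t • e 3 t)
    (hF3 : ∀ t, cov γ (e 3) t = -(κ' 1 t) • e 2 t + κ' 2 t • e 4 t)
    (hF4 : ∀ t, cov γ (e 4) t = -(κ' 2 t) • e 3 t + κ' 3 t • e 5 t)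
    (hF5 : ∀ t, cov γ (e 5) t = -(κ' 3 t) • e 4 t + κ' 4 t • e 6 t)
    (f1 f2 f3 f4 f5 : ℝ → ℝ) (f1' f2' f3' f4' f5' : ℝ) (t : ℝ)
    (h1 : HasDerivAt f1 f1' t) (h2 : HasDerivAt f2 f2' t) (h3 : HasDerivAt f3 f3' t)
    (h4 : HasDerivAt f4 f4' t) (h5 : HasDerivAt f5 f5' t) :
    cov γ (fun s => f1 s • e 1 s + (f2 s • e 2 s + (f3 s • e 3 s + (f4 s • e 4 s + f5 s • e 5 s)))) t
      = (f1' + -(κ' 0 t * f2 t)) • e 1 t +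
        ((κ' 0 t * f1 t + (f2' + -(κ' 1 t * f3 t))) • e 2 t +
        ((κ' 1 t * f2 t + (f3' + -(κ' 2 t * f4 t))) • e 3 t +
        ((κ' 2 t * f3 t + (f4' + -(κ' 3 t * f5 t))) • e 4 t +
        ((κ' 3 t * f4 t + f5') • e 5 t + (κ' 4 t * f5 t) • e 6 t)))) := by
  have de1 : DifferentiableAt ℝ (e 1) t := (hde 1 (by norm_num) (by norm_num)) t
  have de2 : DifferentiableAt ℝ (e 2) t := (hde 2 (by norm_num) (by norm_num)) t
  have de3 : DifferentiableAt ℝ (e 3) t := (hde 3 (by norm_num) (by norm_num)) t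
  have de4 : DifferentiableAt ℝ (e 4) t := (hde 4 (by norm_num) (by norm_num)) t
  have de5 : DifferentiableAt ℝ (e 5) t := (hde 5 (by norm_num) (by norm_num)) t
  have D1 : DifferentiableAt ℝ (fun s => f1 s • e 1 s) t := h1.differentiableAt.smul de1
  have D2 : DifferentiableAt ℝ (fun s => f2 s • e 2 s) t := h2.differentiableAt.smul de2
  have D3 : DifferentiableAt ℝ (fun s => f3 s • e 3 s) t := h3.differentiableAt.smul de3
  have D4 : DifferentiableAt ℝ (fun s => f4 s • e 4 s) t := h4.differentiableAt.smul de4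
  have D5 : DifferentiableAt ℝ (fun s => f5 s • e 5 s) t := h5.differentiableAt.smul de5
  have D45 : DifferentiableAt ℝ (fun s => f4 s • e 4 s + f5 s • e 5 s) t := D4.add D5
  have D345 : DifferentiableAt ℝ (fun s => f3 s • e 3 s + (f4 s • e 4 s + f5 s • e 5 s)) t :=
    D3.add D45
  have D2345 : DifferentiableAt ℝ
      (fun s => f2 s • e 2 s + (f3 s • e 3 s + (f4 s • e 4 s + f5 s • e 5 s))) t := D2.add D345
  rw [cov_add γ _ _ t D1 D2345, cov_add γ _ _ t D2 D345, cov_add γ _ _ t D3 D45,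
    cov_add γ _ _ t D4 D5,
    cov_smul γ f1 f1' (e 1) t h1 de1 (htan 1 (by norm_num) (by norm_num) t),
    cov_smul γ f2 f2' (e 2) t h2 de2 (htan 2 (by norm_num) (by norm_num) t),
    cov_smul γ f3 f3' (e 3) t h3 de3 (htan 3 (by norm_num) (by norm_num) t),
    cov_smul γ f4 f4' (e 4) t h4 de4 (htan 4 (by norm_num) (by norm_num) t),
    cov_smul γ f5 f5' (e 5) t h5 de5 (htan 5 (by norm_num) (by norm_num) t),
    hF1 t, hF2 t, hF3 t, hF4 t, hF5 t]
  module

theorem cov_comboE {n : ℕ} (γ : ℝ → EuclideanSpace ℝ (Fin (n+1)))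
    (κ' : Fin 5 → ℝ → ℝ) (e : ℕ → ℝ → EuclideanSpace ℝ (Fin (n+1)))
    (hκ : ∀ i, ContDiff ℝ ∞ (κ' i))
    (hde : ∀ i, 1 ≤ i → i ≤ 5 → Differentiable ℝ (e i))
    (htan : ∀ i, 1 ≤ i → i ≤ 5 → ∀ t, ⟪e i t, γ t⟫ = 0)
    (hF1 : ∀ t, cov γ (e 1) t = κ' 0 t • e 2 t)
    (hF2 : ∀ t, cov γ (e 2) t = -(κ' 0 t) • e 1 t + κ' 1 t • e 3 t)
    (hF3 : ∀ t, cov γ (e 3) t = -(κ' 1 t) • e 2 t + κ' 2 t • e 4 t)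
    (hF4 : ∀ t, cov γ (e 4) t = -(κ' 2 t) • e 3 t + κ' 3 t • e 5 t)
    (hF5 : ∀ t, cov γ (e 5) t = -(κ' 3 t) • e 4 t + κ' 4 t • e 6 t)
    (p1 p2 p3 p4 p5 : E) (t : ℝ) :
    cov γ (fun s => E.ev κ' p1 s • e 1 s + (E.ev κ' p2 s • e 2 s + (E.ev κ' p3 s • e 3 s +
      (E.ev κ' p4 s • e 4 s + E.ev κ' p5 s • e 5 s)))) t
      = E.ev κ' (st1 p1 p2) t • e 1 t +
        (E.ev κ' (st2 p1 p2 p3) t • e 2 t +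
        (E.ev κ' (st3 p2 p3 p4) t • e 3 t +
        (E.ev κ' (st4 p3 p4 p5) t • e 4 t +
        (E.ev κ' (st5 p4 p5) t • e 5 t + E.ev κ' (st6 p5) t • e 6 t)))) := by
  rw [cov_combo_fun γ κ' e hde htan hF1 hF2 hF3 hF4 hF5
    (E.ev κ' p1) (E.ev κ' p2) (E.ev κ' p3) (E.ev κ' p4) (E.ev κ' p5)
    (E.ev κ' p1.D t) (E.ev κ' p2.D t) (E.ev κ' p3.D t) (E.ev κ' p4.D t) (E.ev κ' p5.D t) t
    (E.hasDeriv hκ p1 t) (E.hasDeriv hκ p2 t) (E.hasDeriv hκ p3 t) (E.hasDeriv hκ p4 t)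
    (E.hasDeriv hκ p5 t)]
  simp only [st1, st2, st3, st4, st5, st6, E.ev, Function.iterate_zero, id_eq]

theorem comps_zero {n : ℕ} (e : ℕ → ℝ → EuclideanSpace ℝ (Fin (n+1))) (t : ℝ)
    (ho : ∀ i j, 1 ≤ i → i ≤ 6 → 1 ≤ j → j ≤ 6 → ⟪e i t, e j t⟫ = if i = j then (1:ℝ) else 0)
    (c1 c2 c3 c4 c5 c6 : ℝ)
    (h : c1 • e 1 t + (c2 • e 2 t + (c3 • e 3 t + (c4 • e 4 t + (c5 • e 5 t + c6 • e 6 t)))) = 0) :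
    c1 = 0 ∧ c2 = 0 ∧ c3 = 0 ∧ c4 = 0 ∧ c5 = 0 ∧ c6 = 0 := by
  have g1 : c1 = 0 := by
    have hj := congrArg (fun v => ⟪v, e 1 t⟫) h
    simp only [inner_add_left, real_inner_smul_left, inner_zero_left, ho 1 1 (by norm_num) (by norm_num) (by norm_num) (by norm_num), ho 2 1 (by norm_num) (by norm_num) (by norm_num) (by norm_num), ho 3 1 (by norm_num) (by norm_num) (by norm_num) (by norm_num), ho 4 1 (by norm_num) (by norm_num) (by norm_num) (by norm_num), ho 5 1 (by norm_num) (by norm_num) (by norm_num) (by norm_num), ho 6 1 (by norm_num) (by norm_num) (by norm_num) (by norm_num)] at hj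
    norm_num at hj
    linarith
  have g2 : c2 = 0 := by
    have hj := congrArg (fun v => ⟪v, e 2 t⟫) h
    simp only [inner_add_left, real_inner_smul_left, inner_zero_left, ho 1 2 (by norm_num) (by norm_num) (by norm_num) (by norm_num), ho 2 2 (by norm_num) (by norm_num) (by norm_num) (by norm_num), ho 3 2 (by norm_num) (by norm_num) (by norm_num) (by norm_num), ho 4 2 (by norm_num) (by norm_num) (by norm_num) (by norm_num), ho 5 2 (by norm_num) (by norm_num) (by norm_num) (by norm_num), ho 6 2 (by norm_num) (by norm_num) (by norm_num) (by norm_num)] at hj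
    norm_num at hj
    linarith
  have g3 : c3 = 0 := by
    have hj := congrArg (fun v => ⟪v, e 3 t⟫) h
    simp only [inner_add_left, real_inner_smul_left, inner_zero_left, ho 1 3 (by norm_num) (by norm_num) (by norm_num) (by norm_num), ho 2 3 (by norm_num) (by norm_num) (by norm_num) (by norm_num), ho 3 3 (by norm_num) (by norm_num) (by norm_num) (by norm_num), ho 4 3 (by norm_num) (by norm_num) (by norm_num) (by norm_num), ho 5 3 (by norm_num) (by norm_num) (by norm_num) (by norm_num), ho 6 3 (by norm_num) (by norm_num) (by norm_num) (by norm_num)] at hj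
    norm_num at hj
    linarith
  have g4 : c4 = 0 := by
    have hj := congrArg (fun v => ⟪v, e 4 t⟫) h
    simp only [inner_add_left, real_inner_smul_left, inner_zero_left, ho 1 4 (by norm_num) (by norm_num) (by norm_num) (by norm_num), ho 2 4 (by norm_num) (by norm_num) (by norm_num) (by norm_num), ho 3 4 (by norm_num) (by norm_num) (by norm_num) (by norm_num), ho 4 4 (by norm_num) (by norm_num) (by norm_num) (by norm_num), ho 5 4 (by norm_num) (by norm_num) (by norm_num) (by norm_num), ho 6 4 (by norm_num) (by norm_num) (by norm_num) (by norm_num)] at hj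
    norm_num at hj
    linarith
  have g5 : c5 = 0 := by
    have hj := congrArg (fun v => ⟪v, e 5 t⟫) h
    simp only [inner_add_left, real_inner_smul_left, inner_zero_left, ho 1 5 (by norm_num) (by norm_num) (by norm_num) (by norm_num), ho 2 5 (by norm_num) (by norm_num) (by norm_num) (by norm_num), ho 3 5 (by norm_num) (by norm_num) (by norm_num) (by norm_num), ho 4 5 (by norm_num) (by norm_num) (by norm_num) (by norm_num), ho 5 5 (by norm_num) (by norm_num) (by norm_num) (by norm_num), ho 6 5 (by norm_num) (by norm_num) (by norm_num) (by norm_num)] at hj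
    norm_num at hj
    linarith
  have g6 : c6 = 0 := by
    have hj := congrArg (fun v => ⟪v, e 6 t⟫) h
    simp only [inner_add_left, real_inner_smul_left, inner_zero_left, ho 1 6 (by norm_num) (by norm_num) (by norm_num) (by norm_num), ho 2 6 (by norm_num) (by norm_num) (by norm_num) (by norm_num), ho 3 6 (by norm_num) (by norm_num) (by norm_num) (by norm_num), ho 4 6 (by norm_num) (by norm_num) (by norm_num) (by norm_num), ho 5 6 (by norm_num) (by norm_num) (by norm_num) (by norm_num), ho 6 6 (by norm_num) (by norm_num) (by norm_num) (by norm_num)] at hj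
    norm_num at hj
    linarith
  exact ⟨g1, g2, g3, g4, g5, g6⟩

set_option maxHeartbeats 2000000 in
theorem evQ1 (k : ℕ → ℝ → ℝ) (t : ℝ) : E.ev (KP k) Q1 t = (5:ℝ) * (-2 * (deriv (k 1) t) * (iteratedDeriv 2 (k 1) t) - k 1 t * (iteratedDeriv 3 (k 1) t) + 2 * (k 1 t)^3 * (deriv (k 1) t) + k 1 t * (deriv (k 1) t) * (k 2 t)^2 + (k 1 t)^2 * k 2 t * (deriv (k 2) t)) := by
  simp only [Q1, Q2, Q3, Q4, Q5, Q6, u1, u2, u3, u4, u5, u6, w1, w2, w3, w4, w5, nr1, nr2, nr3, nr4, nr5, r1, r2, r3, r4, r5, q1, q2, q3, q4, q5, ze, ka, st1, st2, st3, st4, st5, st6, E.D]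
  simp only [E.ev]
  simp only [KP0, KP1, KP2, KP3, KP4, Nat.reduceAdd, Function.iterate_one, Function.iterate_zero,
    id_eq, iteratedDeriv_eq_iterate]
  ring

set_option maxHeartbeats 2000000 in
theorem evQ2 (k : ℕ → ℝ → ℝ) (t : ℝ) : E.ev (KP k) Q2 t = ((-15 * k 1 t * (deriv (k 1) t)^2 - 10 * (k 1 t)^2 * (iteratedDeriv 2 (k 1) t) + (k 1 t)^5 + 2 * (k 1 t)^3 * (k 2 t)^2 + (iteratedDeriv 4 (k 1) t) - 6 * (iteratedDeriv 2 (k 1) t) * (k 2 t)^2 - 12 * (deriv (k 1) t) * k 2 t * (deriv (k 2) t) - 3 * k 1 t * (deriv (k 2) t)^2 - 4 * k 1 t * k 2 t * (iteratedDeriv 2 (k 2) t) + k 1 t * (k 2 t)^4 + k 1 t * (k 2 t)^2 * (k 3 t)^2) + ((iteratedDeriv 2 (k 1) t) - (k 1 t)^3 - k 1 t * (k 2 t)^2)) := by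
  simp only [Q1, Q2, Q3, Q4, Q5, Q6, u1, u2, u3, u4, u5, u6, w1, w2, w3, w4, w5, nr1, nr2, nr3, nr4, nr5, r1, r2, r3, r4, r5, q1, q2, q3, q4, q5, ze, ka, st1, st2, st3, st4, st5, st6, E.D]
  simp only [E.ev]
  simp only [KP0, KP1, KP2, KP3, KP4, Nat.reduceAdd, Function.iterate_one, Function.iterate_zero,
    id_eq, iteratedDeriv_eq_iterate]
  ring

set_option maxHeartbeats 2000000 in
theorem evQ3 (k : ℕ → ℝ → ℝ) (t : ℝ) : E.ev (KP k) Q3 t = ((4 * (iteratedDeriv 3 (k 1) t) * k 2 t - 9 * (k 1 t)^2 * (deriv (k 1) t) * k 2 t - 4 * (deriv (k 1) t) * (k 2 t)^3 - 6 * k 1 t * (k 2 t)^2 * (deriv (k 2) t) + 6 * (iteratedDeriv 2 (k 1) t) * (deriv (k 2) t) - (k 1 t)^3 * (deriv (k 2) t) + 4 * (deriv (k 1) t) * (iteratedDeriv 2 (k 2) t) + k 1 t * (iteratedDeriv 3 (k 2) t) - 4 * (deriv (k 1) t) * k 2 t * (k 3 t)^2 - 3 * k 1 t * (deriv (k 2)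 t) * (k 3 t)^2 - 3 * k 1 t * k 2 t * k 3 t * (deriv (k 3) t)) + (2 * (deriv (k 1) t) * k 2 t + k 1 t * (deriv (k 2) t))) := by
  simp only [Q1, Q2, Q3, Q4, Q5, Q6, u1, u2, u3, u4, u5, u6, w1, w2, w3, w4, w5, nr1, nr2, nr3, nr4, nr5, r1, r2, r3, r4, r5, q1, q2, q3, q4, q5, ze, ka, st1, st2, st3, st4, st5, st6, E.D]
  simp only [E.ev]
  simp only [KP0, KP1, KP2, KP3, KP4, Nat.reduceAdd, Function.iterate_one, Function.iterate_zero,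
    id_eq, iteratedDeriv_eq_iterate]
  ring

set_option maxHeartbeats 2000000 in
theorem evQ4 (k : ℕ → ℝ → ℝ) (t : ℝ) : E.ev (KP k) Q4 t = ((6 * (iteratedDeriv 2 (k 1) t) * k 2 t * k 3 t - (k 1 t)^3 * k 2 t * k 3 t - k 1 t * (k 2 t)^3 * k 3 t + 8 * (deriv (k 1) t) * (deriv (k 2) t) * k 3 t + 3 * k 1 t * (iteratedDeriv 2 (k 2) t) * k 3 t - k 1 t * k 2 t * (k 3 t)^3 + 4 * (deriv (k 1) t) * k 2 t * (deriv (k 3) t) + 3 * k 1 t * (deriv (k 2) t) * (deriv (k 3) t) + k 1 t * k 2 t * (iteratedDeriv 2 (k 3) t) - k 1 t * k 2 t * k 3 t * (k 4 t)^2) + k 1 t * k 2 t * k 3 t) := by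
  simp only [Q1, Q2, Q3, Q4, Q5, Q6, u1, u2, u3, u4, u5, u6, w1, w2, w3, w4, w5, nr1, nr2, nr3, nr4, nr5, r1, r2, r3, r4, r5, q1, q2, q3, q4, q5, ze, ka, st1, st2, st3, st4, st5, st6, E.D]
  simp only [E.ev]
  simp only [KP0, KP1, KP2, KP3, KP4, Nat.reduceAdd, Function.iterate_one, Function.iterate_zero,
    id_eq, iteratedDeriv_eq_iterate]
  ring

set_option maxHeartbeats 2000000 in
theorem evQ5 (k : ℕ → ℝ → ℝ) (t : ℝ) : E.ev (KP k) Q5 t = ((4 * (deriv (k 1) t) * k 2 t * k 3 t * k 4 t + 3 * k 1 t * (deriv (k 2) t) * k 3 t * k 4 t + 2 * k 1 t * k 2 t * (deriv (k 3) t) * k 4 t + k 1 t * k 2 t * k 3 t * (deriv (k 4) t))) := by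
  simp only [Q1, Q2, Q3, Q4, Q5, Q6, u1, u2, u3, u4, u5, u6, w1, w2, w3, w4, w5, nr1, nr2, nr3, nr4, nr5, r1, r2, r3, r4, r5, q1, q2, q3, q4, q5, ze, ka, st1, st2, st3, st4, st5, st6, E.D]
  simp only [E.ev]
  simp only [KP0, KP1, KP2, KP3, KP4, Nat.reduceAdd, Function.iterate_one, Function.iterate_zero,
    id_eq, iteratedDeriv_eq_iterate]
  ring

set_option maxHeartbeats 2000000 in
theorem evQ6 (k : ℕ → ℝ → ℝ) (t : ℝ) : E.ev (KP k) Q6 t = ((k 1 t * k 2 t * k 3 t * k 4 t * k 5 t)) := by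
  simp only [Q1, Q2, Q3, Q4, Q5, Q6, u1, u2, u3, u4, u5, u6, w1, w2, w3, w4, w5, nr1, nr2, nr3, nr4, nr5, r1, r2, r3, r4, r5, q1, q2, q3, q4, q5, ze, ka, st1, st2, st3, st4, st5, st6, E.D]
  simp only [E.ev]
  simp only [KP0, KP1, KP2, KP3, KP4, Nat.reduceAdd, Function.iterate_one, Function.iterate_zero,
    id_eq, iteratedDeriv_eq_iterate]
  ring

end Stmt6Aux

open Stmt6Aux in
set_option maxHeartbeats 1000000 in
theorem stmt_6 (n : ℕ) (hn : 2 ≤ n) (γ : ℝ → EuclideanSpace ℝ (Fin (n+1)))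
    (hγ : ContDiff ℝ (⊤ : ℕ∞) γ)
    (hsph : ∀ t, ⟪γ t, γ t⟫ = 1)
    (harc : ∀ t, ⟪deriv γ t, deriv γ t⟫ = 1)
    (m : ℕ) (hm : 6 ≤ m)
    (e : ℕ → ℝ → EuclideanSpace ℝ (Fin (n+1))) (κ : ℕ → ℝ → ℝ)
    (he_smooth : ∀ i, 1 ≤ i → i ≤ m → ContDiff ℝ (⊤ : ℕ∞) (e i))
    (hκ_smooth : ∀ i, 1 ≤ i → i ≤ m - 1 → ContDiff ℝ (⊤ : ℕ∞) (κ i))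
    (he_tangent : ∀ i, 1 ≤ i → i ≤ m → ∀ t, ⟪e i t, γ t⟫ = 0)
    (he_orthonormal : ∀ i j, 1 ≤ i → i ≤ m → 1 ≤ j → j ≤ m → ∀ t,
      ⟪e i t, e j t⟫ = if i = j then (1 : ℝ) else 0)
    (he_one : e 1 = deriv γ)
    (hFrenet_one : ∀ t, cov γ (e 1) t = κ 1 t • e 2 t)
    (hFrenet : ∀ i, 2 ≤ i → i ≤ m - 1 → ∀ t,
      cov γ (e i) t = -(κ (i-1) t) • e (i-1) t + κ i t • e (i+1) t) :
    (∀ t, tauK 3 γ t = 0) ↔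
      ((∀ t, -2 * (deriv (κ 1) t) * (iteratedDeriv 2 (κ 1) t) - κ 1 t * (iteratedDeriv 3 (κ 1) t) + 2 * (κ 1 t)^3 * (deriv (κ 1) t) + κ 1 t * (deriv (κ 1) t) * (κ 2 t)^2 + (κ 1 t)^2 * κ 2 t * (deriv (κ 2) t) = 0) ∧
       (∀ t, (-15 * κ 1 t * (deriv (κ 1) t)^2 - 10 * (κ 1 t)^2 * (iteratedDeriv 2 (κ 1) t) + (κ 1 t)^5 + 2 * (κ 1 t)^3 * (κ 2 t)^2 + (iteratedDeriv 4 (κ 1) t) - 6 * (iteratedDeriv 2 (κ 1) t) * (κ 2 t)^2 - 12 * (deriv (κ 1) t) * κ 2 t * (deriv (κ 2) t) - 3 * κ 1 t * (deriv (κ 2) t)^2 - 4 * κ 1 t * κ 2 t * (iteratedDeriv 2 (κ 2) t) + κ 1 t * (κ 2 t)^4 + κ 1 t * (κ 2 t)^2 * (κ 3 t)^2) + ((iteratedDeriv 2 (κ 1) t) - (κ 1 t)^3 - κ 1 t * (κ 2 t)^2) = 0) ∧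
       (∀ t, (4 * (iteratedDeriv 3 (κ 1) t) * κ 2 t - 9 * (κ 1 t)^2 * (deriv (κ 1) t) * κ 2 t - 4 * (deriv (κ 1) t) * (κ 2 t)^3 - 6 * κ 1 t * (κ 2 t)^2 * (deriv (κ 2) t) + 6 * (iteratedDeriv 2 (κ 1) t) * (deriv (κ 2) t) - (κ 1 t)^3 * (deriv (κ 2) t) + 4 * (deriv (κ 1) t) * (iteratedDeriv 2 (κ 2) t) + κ 1 t * (iteratedDeriv 3 (κ 2) t) - 4 * (deriv (κ 1) t) * κ 2 t * (κ 3 t)^2 - 3 * κ 1 t * (deriv (κ 2) t) * (κ 3 t)^2 - 3 * κ 1 t * κ 2 t * κ 3 t * (deriv (κ 3) t)) + (2 * (deriv (κ 1) t) * κ 2 t + κ 1 t * (deriv (κ 2) t)) = 0) ∧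
       (∀ t, (6 * (iteratedDeriv 2 (κ 1) t) * κ 2 t * κ 3 t - (κ 1 t)^3 * κ 2 t * κ 3 t - κ 1 t * (κ 2 t)^3 * κ 3 t + 8 * (deriv (κ 1) t) * (deriv (κ 2) t) * κ 3 t + 3 * κ 1 t * (iteratedDeriv 2 (κ 2) t) * κ 3 t - κ 1 t * κ 2 t * (κ 3 t)^3 + 4 * (deriv (κ 1) t) * κ 2 t * (deriv (κ 3) t) + 3 * κ 1 t * (deriv (κ 2) t) * (deriv (κ 3) t) + κ 1 t * κ 2 t * (iteratedDeriv 2 (κ 3) t) - κ 1 t * κ 2 t * κ 3 t * (κ 4 t)^2) + κ 1 t * κ 2 t * κ 3 t = 0) ∧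
       (∀ t, (4 * (deriv (κ 1) t) * κ 2 t * κ 3 t * κ 4 t + 3 * κ 1 t * (deriv (κ 2) t) * κ 3 t * κ 4 t + 2 * κ 1 t * κ 2 t * (deriv (κ 3) t) * κ 4 t + κ 1 t * κ 2 t * κ 3 t * (deriv (κ 4) t)) = 0) ∧
       (∀ t, (κ 1 t * κ 2 t * κ 3 t * κ 4 t * κ 5 t) = 0)) := by
  have hkS : ∀ i : Fin 5, ContDiff ℝ ∞ (KP κ i) := by
    intro i
    have h : ContDiff ℝ (⊤ : ℕ∞) (κ (i.val + 1)) := hκ_smooth _ (by omega) (by omega)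
    exact h.of_le (by simp)
  have hde5 : ∀ i, 1 ≤ i → i ≤ 5 → Differentiable ℝ (e i) := fun i h1 h5 =>
    (he_smooth i h1 (by omega)).differentiable (by simp)
  have htan5 : ∀ i, 1 ≤ i → i ≤ 5 → ∀ t, ⟪e i t, γ t⟫ = 0 := fun i h1 h5 =>
    he_tangent i h1 (by omega)
  have ho : ∀ i j, 1 ≤ i → i ≤ 6 → 1 ≤ j → j ≤ 6 → ∀ t,
      ⟪e i t, e j t⟫ = if i = j then (1:ℝ) else 0 :=
    fun i j hi hi' hj hj' => he_orthonormal i j hi (by omega) hj (by omega)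
  have hF1 : ∀ t, cov γ (e 1) t = KP κ 0 t • e 2 t := hFrenet_one
  have hF2 : ∀ t, cov γ (e 2) t = -(KP κ 0 t) • e 1 t + KP κ 1 t • e 3 t := fun t =>
    hFrenet 2 (by omega) (by omega) t
  have hF3 : ∀ t, cov γ (e 3) t = -(KP κ 1 t) • e 2 t + KP κ 2 t • e 4 t := fun t =>
    hFrenet 3 (by omega) (by omega) t
  have hF4 : ∀ t, cov γ (e 4) t = -(KP κ 2 t) • e 3 t + KP κ 3 t • e 5 t := fun t =>
    hFrenet 4 (by omega) (by omega) t
  have hF5 : ∀ t, cov γ (e 5) t = -(KP κ 3 t) • e 4 t + KP κ 4 t • e 6 t := fun t =>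
    hFrenet 5 (by omega) (by omega) t
  have covc := fun (p1 p2 p3 p4 p5 : E) (t : ℝ) =>
    cov_comboE γ (KP κ) e hkS hde5 htan5 hF1 hF2 hF3 hF4 hF5 p1 p2 p3 p4 p5 t
  have h0 : tension γ = fun s => E.ev (KP κ) ze s • e 1 s + (E.ev (KP κ) ka s • e 2 s + (E.ev (KP κ) ze s • e 3 s + (E.ev (KP κ) ze s • e 4 s + (E.ev (KP κ) ze s • e 5 s)))) := by
    funext s
    show cov γ (deriv γ) s = _
    rw [← he_one, hFrenet_one s]
    simp [ze, ka, E.ev, KP0]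
  have h1 : cov γ (tension γ) = fun t => E.ev (KP κ) q1 t • e 1 t + (E.ev (KP κ) q2 t • e 2 t + (E.ev (KP κ) q3 t • e 3 t + (E.ev (KP κ) q4 t • e 4 t + (E.ev (KP κ) q5 t • e 5 t)))) := by
    rw [h0]; funext t
    rw [covc ze ka ze ze ze t]
    have h6 : E.ev (KP κ) (st6 ze) t = 0 := by simp [st6, ze, E.ev]
    rw [h6, zero_smul, add_zero]
    rfl
  have h2 : cov γ (cov γ (tension γ)) = fun t => E.ev (KP κ) r1 t • e 1 t + (E.ev (KP κ) r2 t • e 2 t + (E.ev (KP κ) r3 t • e 3 t + (E.ev (KP κ) r4 t • e 4 t + (E.ev (KP κ) r5 t • e 5 t)))) := by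
    rw [h1]; funext t
    rw [covc q1 q2 q3 q4 q5 t]
    have h6 : E.ev (KP κ) (st6 q5) t = 0 := by simp [st6, q5, st5, ze, E.D, E.ev]
    rw [h6, zero_smul, add_zero]
    rfl
  have hL : lap γ (tension γ) = fun t => E.ev (KP κ) nr1 t • e 1 t + (E.ev (KP κ) nr2 t • e 2 t + (E.ev (KP κ) nr3 t • e 3 t + (E.ev (KP κ) nr4 t • e 4 t + (E.ev (KP κ) nr5 t • e 5 t)))) := by
    funext t
    show -(cov γ (cov γ (tension γ)) t) = _
    simp only [h2]
    simp only [nr1, nr2, nr3, nr4, nr5, E.ev]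
    module
  have h3 : cov γ (lap γ (tension γ)) = fun t => E.ev (KP κ) w1 t • e 1 t + (E.ev (KP κ) w2 t • e 2 t + (E.ev (KP κ) w3 t • e 3 t + (E.ev (KP κ) w4 t • e 4 t + (E.ev (KP κ) w5 t • e 5 t)))) := by
    rw [hL]; funext t
    rw [covc nr1 nr2 nr3 nr4 nr5 t]
    have h6 : E.ev (KP κ) (st6 nr5) t = 0 := by
      simp [st6, nr5, r5, st5, q4, q5, st4, ze, E.D, E.ev]
    rw [h6, zero_smul, add_zero]
    rfl
  have h4 : ∀ t, cov γ (cov γ (lap γ (tension γ))) t = E.ev (KP κ) u1 t • e 1 t + (E.ev (KP κ) u2 t • e 2 t + (E.ev (KP κ) u3 t • e 3 t + (E.ev (KP κ) u4 t • e 4 t + (E.ev (KP κ) u5 t • e 5 t + (E.ev (KP κ) u6 t • e 6 t))))) := by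
    intro t
    rw [h3]
    exact covc w1 w2 w3 w4 w5 t
  have hval : ∀ t, tauK 3 γ t = E.ev (KP κ) Q1 t • e 1 t + (E.ev (KP κ) Q2 t • e 2 t + (E.ev (KP κ) Q3 t • e 3 t + (E.ev (KP κ) Q4 t • e 4 t + (E.ev (KP κ) Q5 t • e 5 t + (E.ev (KP κ) Q6 t • e 6 t))))) := by
    intro t
    have e32 : (lap γ)^[3-2] (tension γ) = lap γ (tension γ) := by
      rw [show (3:ℕ) - 2 = 1 from rfl, Function.iterate_one]
    show lap γ ((lap γ)^[3-2] (tension γ)) t - curvOp γ ((lap γ)^[3-2] (tension γ)) t = _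
    rw [e32]
    rw [show lap γ (lap γ (tension γ)) t = -(cov γ (cov γ (lap γ (tension γ))) t) from rfl]
    rw [show curvOp γ (lap γ (tension γ)) t
        = lap γ (tension γ) t - ⟪lap γ (tension γ) t, deriv γ t⟫ • deriv γ t from rfl]
    rw [h4 t]
    simp only [hL]
    rw [← he_one]
    have hin : ⟪E.ev (KP κ) nr1 t • e 1 t + (E.ev (KP κ) nr2 t • e 2 t + (E.ev (KP κ) nr3 t • e 3 t + (E.ev (KP κ) nr4 t • e 4 t + (E.ev (KP κ) nr5 t • e 5 t)))), e 1 t⟫ = E.ev (KP κ) nr1 t := by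
      simp only [inner_add_left, real_inner_smul_left, ho 1 1 (by norm_num) (by norm_num) (by norm_num) (by norm_num) t, ho 2 1 (by norm_num) (by norm_num) (by norm_num) (by norm_num) t, ho 3 1 (by norm_num) (by norm_num) (by norm_num) (by norm_num) t, ho 4 1 (by norm_num) (by norm_num) (by norm_num) (by norm_num) t, ho 5 1 (by norm_num) (by norm_num) (by norm_num) (by norm_num) t]
      norm_num
    rw [hin]
    simp only [Q1, Q2, Q3, Q4, Q5, Q6, nr1, nr2, nr3, nr4, nr5, E.ev]
    module
  have hiff : ∀ t, tauK 3 γ t = 0 ↔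
      ((-2 * (deriv (κ 1) t) * (iteratedDeriv 2 (κ 1) t) - κ 1 t * (iteratedDeriv 3 (κ 1) t) + 2 * (κ 1 t)^3 * (deriv (κ 1) t) + κ 1 t * (deriv (κ 1) t) * (κ 2 t)^2 + (κ 1 t)^2 * κ 2 t * (deriv (κ 2) t)) = 0 ∧ (((-15 * κ 1 t * (deriv (κ 1) t)^2 - 10 * (κ 1 t)^2 * (iteratedDeriv 2 (κ 1) t) + (κ 1 t)^5 + 2 * (κ 1 t)^3 * (κ 2 t)^2 + (iteratedDeriv 4 (κ 1) t) - 6 * (iteratedDeriv 2 (κ 1) t) * (κ 2 t)^2 - 12 * (deriv (κ 1) t) * κ 2 t * (deriv (κ 2) t) - 3 * κ 1 t * (deriv (κ 2) t)^2 - 4 * κ 1 t * κ 2 t * (iteratedDeriv 2 (κ 2) t) + κ 1 t * (κ 2 t)^4 + κ 1 t * (κ 2 t)^2 * (κ 3 t)^2) + ((iteratedDeriv 2 (κ 1) t) - (κ 1 t)^3 - κ 1 t * (κ 2 t)^2)) = 0 ∧ (((4 * (iteratedDeriv 3 (κ 1) t) * κ 2 t - 9 * (κ 1 t)^2 * (deriv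 (κ 1) t) * κ 2 t - 4 * (deriv (κ 1) t) * (κ 2 t)^3 - 6 * κ 1 t * (κ 2 t)^2 * (deriv (κ 2) t) + 6 * (iteratedDeriv 2 (κ 1) t) * (deriv (κ 2) t) - (κ 1 t)^3 * (deriv (κ 2) t) + 4 * (deriv (κ 1) t) * (iteratedDeriv 2 (κ 2) t) + κ 1 t * (iteratedDeriv 3 (κ 2) t) - 4 * (deriv (κ 1) t) * κ 2 t * (κ 3 t)^2 - 3 * κ 1 t * (deriv (κ 2) t) * (κ 3 t)^2 - 3 * κ 1 t * κ 2 t * κ 3 t * (deriv (κ 3) t)) + (2 * (deriv (κ 1) t) * κ 2 t + κ 1 t * (deriv (κ 2) t))) = 0 ∧ (((6 * (iteratedDeriv 2 (κ 1) t) * κ 2 t * κ 3 t - (κ 1 t)^3 * κ 2 t * κ 3 t - κ 1 t * (κ 2 t)^3 * κ 3 t + 8 * (deriv (κ 1) t) * (deriv (κ 2) t) * κ 3 t + 3 * κ 1 t * (iteratedDeriv 2 (κ 2) t) * κ 3 t - κ 1 t * κ 2 t * (κ 3 t)^3 + 4 * (deriv (κ 1) t) * κ 2 t * (deriv (κ 3)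 t) + 3 * κ 1 t * (deriv (κ 2) t) * (deriv (κ 3) t) + κ 1 t * κ 2 t * (iteratedDeriv 2 (κ 3) t) - κ 1 t * κ 2 t * κ 3 t * (κ 4 t)^2) + κ 1 t * κ 2 t * κ 3 t) = 0 ∧
       (((4 * (deriv (κ 1) t) * κ 2 t * κ 3 t * κ 4 t + 3 * κ 1 t * (deriv (κ 2) t) * κ 3 t * κ 4 t + 2 * κ 1 t * κ 2 t * (deriv (κ 3) t) * κ 4 t + κ 1 t * κ 2 t * κ 3 t * (deriv (κ 4) t))) = 0 ∧ ((κ 1 t * κ 2 t * κ 3 t * κ 4 t * κ 5 t)) = 0))))) := by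
    intro t
    have c1 := evQ1 κ t
    have c2 := evQ2 κ t
    have c3 := evQ3 κ t
    have c4 := evQ4 κ t
    have c5 := evQ5 κ t
    have c6 := evQ6 κ t
    rw [hval t]
    constructor
    · intro h
      obtain ⟨z1, z2, z3, z4, z5, z6⟩ :=
        comps_zero e t (fun i j a b c d => ho i j a b c d t) _ _ _ _ _ _ h
      rw [c1] at z1; rw [c2] at z2; rw [c3] at z3; rw [c4] at z4; rw [c5] at z5; rw [c6] at z6
      exact ⟨by linarith, z2, z3, z4, z5, z6⟩
    · rintro ⟨z1, z2, z3, z4, z5, z6⟩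
      rw [c1, c2, c3, c4, c5, c6, z1, z2, z3, z4, z5, z6]
      simp
  constructor
  · intro h
    exact ⟨fun t => ((hiff t).mp (h t)).1, fun t => ((hiff t).mp (h t)).2.1,
      fun t => ((hiff t).mp (h t)).2.2.1, fun t => ((hiff t).mp (h t)).2.2.2.1,
      fun t => ((hiff t).mp (h t)).2.2.2.2.1, fun t => ((hiff t).mp (h t)).2.2.2.2.2⟩
  · rintro ⟨H1, H2, H3, H4, H5, H6⟩ t
    exact (hiff t).mpr ⟨H1 t, H2 t, H3 t, H4 t, H5 t, H6 t⟩
end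
end

section
/- Suppose γ admits a Frenet system e₁, …, e_m of length m ≥ 4 with curvatures κ₁, …, κ_{m−1}, and suppose κ₁ and κ₂ are constant and κ₂κ₃ ≡ 0. Then for every integer j ≥ 0, the 2j-fold iterated covariant derivative of the tension field satisfies ∇^{2j}(κ₁e₂) = (−1)^j κ₁ (κ₁² + κ₂²)^j e₂. -/
open scoped RealInnerProductSpace

noncomputable section

theorem stmt_7 (n : ℕ) (hn : 2 ≤ n) (γ : ℝ → EuclideanSpace ℝ (Fin (n+1)))
    (hγ : ContDiff ℝ (⊤ : ℕ∞) γ)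
    (hsph : ∀ t, ⟪γ t, γ t⟫ = 1)
    (harc : ∀ t, ⟪deriv γ t, deriv γ t⟫ = 1)
    (m : ℕ) (hm : 4 ≤ m)
    (e : ℕ → ℝ → EuclideanSpace ℝ (Fin (n+1))) (κ : ℕ → ℝ → ℝ)
    (he_smooth : ∀ i, 1 ≤ i → i ≤ m → ContDiff ℝ (⊤ : ℕ∞) (e i))
    (hκ_smooth : ∀ i, 1 ≤ i → i ≤ m - 1 → ContDiff ℝ (⊤ : ℕ∞) (κ i))
    (he_tangent : ∀ i, 1 ≤ i → i ≤ m → ∀ t, ⟪e i t, γ t⟫ = 0)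
    (he_orthonormal : ∀ i j, 1 ≤ i → i ≤ m → 1 ≤ j → j ≤ m → ∀ t,
      ⟪e i t, e j t⟫ = if i = j then (1 : ℝ) else 0)
    (he_one : e 1 = deriv γ)
    (hFrenet_one : ∀ t, cov γ (e 1) t = κ 1 t • e 2 t)
    (hFrenet : ∀ i, 2 ≤ i → i ≤ m - 1 → ∀ t,
      cov γ (e i) t = -(κ (i-1) t) • e (i-1) t + κ i t • e (i+1) t)
    (hκ1const : ∀ s t, κ 1 s = κ 1 t) (hκ2const : ∀ s t, κ 2 s = κ 2 t)
    (hκ2κ3 : ∀ t, κ 2 t * κ 3 t = 0) :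
    ∀ (j : ℕ) (t : ℝ), (cov γ)^[2*j] (fun s => κ 1 s • e 2 s) t =
      ((-1 : ℝ)^j * κ 1 t * ((κ 1 t)^2 + (κ 2 t)^2)^j) • e 2 t := by
  set a : ℝ := κ 1 0 with ha
  set b : ℝ := κ 2 0 with hb
  have hκ1 : ∀ t, κ 1 t = a := fun t => hκ1const t 0
  have hκ2 : ∀ t, κ 2 t = b := fun t => hκ2const t 0
  have hd1 : Differentiable ℝ (e 1) :=
    (he_smooth 1 le_rfl (by omega)).differentiable (by simp)
  have hd2 : Differentiable ℝ (e 2) :=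
    (he_smooth 2 (by omega) (by omega)).differentiable (by simp)
  have hd3 : Differentiable ℝ (e 3) :=
    (he_smooth 3 (by omega) (by omega)).differentiable (by simp)
  have covsmul : ∀ (c : ℝ) (V : ℝ → EuclideanSpace ℝ (Fin (n+1))),
      Differentiable ℝ V → ∀ t, cov γ (fun s => c • V s) t = c • cov γ V t := by
    intro c V hV t
    simp only [cov]
    rw [deriv_fun_const_smul c (hV t), real_inner_smul_left]
    module
  have covadd : ∀ (V W : ℝ → EuclideanSpace ℝ (Fin (n+1))),
      Differentiable ℝ V → Differentiable ℝ W → ∀ t,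
      cov γ (fun s => V s + W s) t = cov γ V t + cov γ W t := by
    intro V W hV hW t
    simp only [cov]
    rw [deriv_fun_add (hV t) (hW t), inner_add_left]
    module
  have h2 : ∀ t, cov γ (e 2) t = -(κ 1 t) • e 1 t + κ 2 t • e 3 t := by
    intro t
    have := hFrenet 2 le_rfl (by omega) t
    simpa using this
  have h3 : ∀ t, cov γ (e 3) t = -(κ 2 t) • e 2 t + κ 3 t • e 4 t := by
    intro t
    have := hFrenet 3 (by omega) (by omega) t
    simpa using this
  -- key double step
  have key : ∀ (c : ℝ) (t : ℝ),
      cov γ (cov γ (fun s => c • e 2 s)) t = (-(c * (a^2 + b^2))) • e 2 t := by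
    intro c t
    have inner_eq : cov γ (fun s => c • e 2 s)
        = fun u => (-(c * a)) • e 1 u + (c * b) • e 3 u := by
      funext u
      rw [covsmul c (e 2) hd2 u, h2 u, hκ1 u, hκ2 u]
      module
    rw [inner_eq, covadd _ _ (hd1.fun_const_smul _) (hd3.fun_const_smul _) t,
        covsmul _ _ hd1 t, covsmul _ _ hd3 t, hFrenet_one t, h3 t, hκ1 t, hκ2 t]
    have hz : (c * b) • (κ 3 t • e 4 t) = 0 := by
      rw [smul_smul]
      have : c * b * κ 3 t = c * (κ 2 t * κ 3 t) := by rw [hκ2 t]; ring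
      rw [this, hκ2κ3 t, mul_zero, zero_smul]
    rw [smul_add, hz]
    rw [smul_smul, smul_smul]
    rw [add_zero, ← add_smul]
    congr 1
    ring
  intro j
  induction j with
  | zero =>
      intro t
      simp
  | succ j ih =>
      intro t
      have hfun : (cov γ)^[2*j] (fun s => κ 1 s • e 2 s)
          = fun s => ((-1 : ℝ)^j * a * (a^2 + b^2)^j) • e 2 s := by
        funext s
        rw [ih s, hκ1 s, hκ2 s]
      have h2j : 2 * (j + 1) = (2 * j) + 1 + 1 := by ring
      rw [h2j, Function.iterate_succ_apply', Function.iterate_succ_apply', hfun,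
        key ((-1 : ℝ)^j * a * (a^2 + b^2)^j) t, hκ1 t, hκ2 t]
      congr 1
      ring
end
end

section
/- If γ is biharmonic, i.e. the fourth derivative γ⁗ vanishes identically, then γ is harmonic, i.e. γ″ ≡ 0. In other words, there are no proper biharmonic curves parametrized by arc length in Euclidean space. -/
open scoped RealInnerProductSpace

noncomputable section

theorem stmt_10 (n : ℕ) (hn : 1 ≤ n) (γ : ℝ → EuclideanSpace ℝ (Fin n))
    (hγ : ContDiff ℝ (⊤ : ℕ∞) γ)
    (harc : ∀ t, ⟪deriv γ t, deriv γ t⟫ = 1)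
    (hbi : ∀ t, iteratedDeriv 4 γ t = 0) :
    ∀ t, iteratedDeriv 2 γ t = 0 := by
  have hγ' : ContDiff ℝ ((⊤:ℕ∞) : WithTop ℕ∞) γ := hγ.of_le (by simp)
  have hsm : ∀ k : ℕ, ContDiff ℝ ((⊤:ℕ∞) : WithTop ℕ∞) (iteratedDeriv k γ) := by
    intro k
    rw [iteratedDeriv_eq_iterate]
    exact hγ'.iterate_deriv k
  -- HasDerivAt facts
  have hder : ∀ (k : ℕ) (t : ℝ),
      HasDerivAt (iteratedDeriv k γ) (iteratedDeriv (k + 1) γ t) t := by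
    intro k t
    have := ((hsm k).differentiable (by simp) t).hasDerivAt
    rwa [iteratedDeriv_succ]
  have hd1 : ∀ t, HasDerivAt (deriv γ) (iteratedDeriv 2 γ t) t := by
    intro t
    have := hder 1 t
    rwa [iteratedDeriv_one] at this
  have hd2 : ∀ t, HasDerivAt (iteratedDeriv 2 γ) (iteratedDeriv 3 γ t) t := hder 2
  have hd3 : ∀ t, HasDerivAt (iteratedDeriv 3 γ) 0 t := by
    intro t
    have := hder 3 t
    rwa [hbi t] at this
  -- γ''' is constant
  -- step 1: ⟪γ'', γ'⟫ = 0
  have h21 : ∀ t, ⟪iteratedDeriv 2 γ t, deriv γ t⟫ = 0 := by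
    intro t
    have h1 : HasDerivAt (fun t => ⟪deriv γ t, deriv γ t⟫)
        (⟪deriv γ t, iteratedDeriv 2 γ t⟫ + ⟪iteratedDeriv 2 γ t, deriv γ t⟫) t :=
      (hd1 t).inner ℝ (hd1 t)
    have h2 : HasDerivAt (fun t : ℝ => ⟪deriv γ t, deriv γ t⟫) 0 t := by
      have : (fun t : ℝ => ⟪deriv γ t, deriv γ t⟫) = fun _ : ℝ => (1 : ℝ) :=
        funext harc
      rw [this]; exact hasDerivAt_const t 1
    have := h1.unique h2
    rw [real_inner_comm] at this
    linarith
  -- step 2: ⟪γ''', γ'⟫ + ⟪γ'', γ''⟫ = 0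
  have h31 : ∀ t, ⟪iteratedDeriv 2 γ t, iteratedDeriv 2 γ t⟫
      + ⟪iteratedDeriv 3 γ t, deriv γ t⟫ = 0 := by
    intro t
    have h1 : HasDerivAt (fun t => ⟪iteratedDeriv 2 γ t, deriv γ t⟫)
        (⟪iteratedDeriv 2 γ t, iteratedDeriv 2 γ t⟫ + ⟪iteratedDeriv 3 γ t, deriv γ t⟫) t :=
      (hd2 t).inner ℝ (hd1 t)
    have h2 : HasDerivAt (fun t : ℝ => ⟪iteratedDeriv 2 γ t, deriv γ t⟫) 0 t := by
      have : (fun t : ℝ => ⟪iteratedDeriv 2 γ t, deriv γ t⟫) = fun _ : ℝ => (0 : ℝ) :=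
        funext h21
      rw [this]; exact hasDerivAt_const t 0
    exact h1.unique h2
  -- step 3: ⟪γ''', γ''⟫ = 0
  have h32 : ∀ t, ⟪iteratedDeriv 3 γ t, iteratedDeriv 2 γ t⟫ = 0 := by
    intro t
    have h1 : HasDerivAt
        (fun t => ⟪iteratedDeriv 2 γ t, iteratedDeriv 2 γ t⟫
          + ⟪iteratedDeriv 3 γ t, deriv γ t⟫)
        ((⟪iteratedDeriv 2 γ t, iteratedDeriv 3 γ t⟫
          + ⟪iteratedDeriv 3 γ t, iteratedDeriv 2 γ t⟫)
          + (⟪iteratedDeriv 3 γ t, iteratedDeriv 2 γ t⟫ + ⟪(0 : EuclideanSpace ℝ (Fin n)), deriv γ t⟫)) t :=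
      ((hd2 t).inner ℝ (hd2 t)).add ((hd3 t).inner ℝ (hd1 t))
    have h2 : HasDerivAt
        (fun t : ℝ => ⟪iteratedDeriv 2 γ t, iteratedDeriv 2 γ t⟫
          + ⟪iteratedDeriv 3 γ t, deriv γ t⟫) 0 t := by
      have : (fun t : ℝ => ⟪iteratedDeriv 2 γ t, iteratedDeriv 2 γ t⟫
          + ⟪iteratedDeriv 3 γ t, deriv γ t⟫) = fun _ : ℝ => (0 : ℝ) := funext h31
      rw [this]; exact hasDerivAt_const t 0
    have := h1.unique h2
    rw [real_inner_comm (iteratedDeriv 2 γ t), inner_zero_left] at this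
    rw [real_inner_comm]
    linarith
  -- step 4: γ''' = 0
  have h33 : ∀ t, iteratedDeriv 3 γ t = 0 := by
    intro t
    have h1 : HasDerivAt (fun t => ⟪iteratedDeriv 3 γ t, iteratedDeriv 2 γ t⟫)
        (⟪iteratedDeriv 3 γ t, iteratedDeriv 3 γ t⟫
          + ⟪(0 : EuclideanSpace ℝ (Fin n)), iteratedDeriv 2 γ t⟫) t :=
      (hd3 t).inner ℝ (hd2 t)
    have h2 : HasDerivAt (fun t : ℝ => ⟪iteratedDeriv 3 γ t, iteratedDeriv 2 γ t⟫) 0 t := by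
      have : (fun t : ℝ => ⟪iteratedDeriv 3 γ t, iteratedDeriv 2 γ t⟫) = fun _ : ℝ => (0 : ℝ) :=
        funext h32
      rw [this]; exact hasDerivAt_const t 0
    have := h1.unique h2
    rw [inner_zero_left, add_zero] at this
    exact inner_self_eq_zero.mp this
  -- conclude: ⟪γ'', γ''⟫ = 0
  intro t
  have := h31 t
  rw [h33 t, inner_zero_left, add_zero] at this
  exact inner_self_eq_zero.mp this
end
end

section
/- Suppose γ admits a Frenet system e₁, …, e_m of length m ≥ 6 with curvatures κ₁, …, κ_{m−1}. Then the fourth derivative of the tension field τ(γ) = κ₁e₂ satisfies (κ₁e₂)⁗ = (−10κ₁′κ₁″ − 5κ₁κ₁‴ + 10κ₁³κ₁′ + 5κ₁κ₁′κ₂² + 5κ₁²κ₂κ₂′) e₁ + (−15κ₁(κ₁′)² − 10κ₁²κ₁″ + κ₁⁵ + 2κ₁³κ₂² + κ₁⁽⁴⁾ − 6κ₁″κ₂² − 12κ₁′κ₂κ₂′ − 3κ₁(κ₂′)² − 4κ₁κ₂κ₂″ + κ₁κ₂⁴ + κ₁κ₂²κ₃²) e₂ + (4κ₁‴κ₂ −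 9κ₁²κ₁′κ₂ − 4κ₁′κ₂³ − 6κ₁κ₂²κ₂′ + 6κ₁″κ₂′ − κ₁³κ₂′ + 4κ₁′κ₂″ + κ₁κ₂‴ − 4κ₁′κ₂κ₃² − 3κ₁κ₂′κ₃² − 3κ₁κ₂κ₃κ₃′) e₃ + (6κ₁″κ₂κ₃ − κ₁³κ₂κ₃ − κ₁κ₂³κ₃ + 8κ₁′κ₂′κ₃ + 3κ₁κ₂″κ₃ − κ₁κ₂κ₃³ + 4κ₁′κ₂κ₃′ + 3κ₁κ₂′κ₃′ + κ₁κ₂κ₃″ − κ₁κ₂κ₃κ₄²) e₄ + (4κ₁′κ₂κ₃κ₄ + 3κ₁κ₂′κ₃κ₄ + 2κ₁κ₂κ₃′κ₄ + κ₁κ₂κ₃κ₄′) e₅ + κ₁κ₂κ₃κ₄κ₅ e₆. -/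
open scoped RealInnerProductSpace ContDiff

noncomputable section

private theorem itd_two {F : Type*} [NormedAddCommGroup F] [NormedSpace ℝ F] (f : ℝ → F) :
    iteratedDeriv 2 f = deriv (deriv f) := by
  rw [show (2:ℕ) = 1+1 from rfl, iteratedDeriv_succ, iteratedDeriv_one]

private theorem itd_three {F : Type*} [NormedAddCommGroup F] [NormedSpace ℝ F] (f : ℝ → F) :
    iteratedDeriv 3 f = deriv (deriv (deriv f)) := by
  rw [show (3:ℕ) = 2+1 from rfl, iteratedDeriv_succ, itd_two]

private theorem itd_four {F : Type*} [NormedAddCommGroup F] [NormedSpace ℝ F] (f : ℝ → F) :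
    iteratedDeriv 4 f = deriv (deriv (deriv (deriv f))) := by
  rw [show (4:ℕ) = 3+1 from rfl, iteratedDeriv_succ, itd_three]
theorem stmt_12 (n : ℕ) (hn : 1 ≤ n) (γ : ℝ → EuclideanSpace ℝ (Fin n))
    (hγ : ContDiff ℝ (⊤ : ℕ∞) γ)
    (harc : ∀ t, ⟪deriv γ t, deriv γ t⟫ = 1)
    (m : ℕ) (hm : 6 ≤ m)
    (e : ℕ → ℝ → EuclideanSpace ℝ (Fin n)) (κ : ℕ → ℝ → ℝ)
    (he_smooth : ∀ i, 1 ≤ i → i ≤ m → ContDiff ℝ (⊤ : ℕ∞) (e i))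
    (hκ_smooth : ∀ i, 1 ≤ i → i ≤ m - 1 → ContDiff ℝ (⊤ : ℕ∞) (κ i))
    (he_orthonormal : ∀ i j, 1 ≤ i → i ≤ m → 1 ≤ j → j ≤ m → ∀ t,
      ⟪e i t, e j t⟫ = if i = j then (1 : ℝ) else 0)
    (he_one : e 1 = deriv γ)
    (hFrenet_one : ∀ t, deriv (e 1) t = κ 1 t • e 2 t)
    (hFrenet : ∀ i, 2 ≤ i → i ≤ m - 1 → ∀ t,
      deriv (e i) t = -(κ (i-1) t) • e (i-1) t + κ i t • e (i+1) t) :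
    ∀ t, iteratedDeriv 4 (fun s => κ 1 s • e 2 s) t =
      (-10 * (deriv (κ 1) t) * (iteratedDeriv 2 (κ 1) t) - 5 * κ 1 t * (iteratedDeriv 3 (κ 1) t) + 10 * (κ 1 t)^3 * (deriv (κ 1) t) + 5 * κ 1 t * (deriv (κ 1) t) * (κ 2 t)^2 + 5 * (κ 1 t)^2 * κ 2 t * (deriv (κ 2) t)) • e 1 t
      + (-15 * κ 1 t * (deriv (κ 1) t)^2 - 10 * (κ 1 t)^2 * (iteratedDeriv 2 (κ 1) t) + (κ 1 t)^5 + 2 * (κ 1 t)^3 * (κ 2 t)^2 + (iteratedDeriv 4 (κ 1) t) - 6 * (iteratedDeriv 2 (κ 1) t) * (κ 2 t)^2 - 12 * (deriv (κ 1) t) * κ 2 t * (deriv (κ 2) t) - 3 * κ 1 t * (deriv (κ 2) t)^2 - 4 * κ 1 t * κ 2 t * (iteratedDeriv 2 (κ 2) t) + κ 1 t * (κ 2 t)^4 + κ 1 t * (κ 2 t)^2 * (κ 3 t)^2) • e 2 t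
      + (4 * (iteratedDeriv 3 (κ 1) t) * κ 2 t - 9 * (κ 1 t)^2 * (deriv (κ 1) t) * κ 2 t - 4 * (deriv (κ 1) t) * (κ 2 t)^3 - 6 * κ 1 t * (κ 2 t)^2 * (deriv (κ 2) t) + 6 * (iteratedDeriv 2 (κ 1) t) * (deriv (κ 2) t) - (κ 1 t)^3 * (deriv (κ 2) t) + 4 * (deriv (κ 1) t) * (iteratedDeriv 2 (κ 2) t) + κ 1 t * (iteratedDeriv 3 (κ 2) t) - 4 * (deriv (κ 1) t) * κ 2 t * (κ 3 t)^2 - 3 * κ 1 t * (deriv (κ 2) t) * (κ 3 t)^2 - 3 * κ 1 t * κ 2 t * κ 3 t * (deriv (κ 3) t)) • e 3 t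
      + (6 * (iteratedDeriv 2 (κ 1) t) * κ 2 t * κ 3 t - (κ 1 t)^3 * κ 2 t * κ 3 t - κ 1 t * (κ 2 t)^3 * κ 3 t + 8 * (deriv (κ 1) t) * (deriv (κ 2) t) * κ 3 t + 3 * κ 1 t * (iteratedDeriv 2 (κ 2) t) * κ 3 t - κ 1 t * κ 2 t * (κ 3 t)^3 + 4 * (deriv (κ 1) t) * κ 2 t * (deriv (κ 3) t) + 3 * κ 1 t * (deriv (κ 2) t) * (deriv (κ 3) t) + κ 1 t * κ 2 t * (iteratedDeriv 2 (κ 3) t) - κ 1 t * κ 2 t * κ 3 t * (κ 4 t)^2) • e 4 t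
      + (4 * (deriv (κ 1) t) * κ 2 t * κ 3 t * κ 4 t + 3 * κ 1 t * (deriv (κ 2) t) * κ 3 t * κ 4 t + 2 * κ 1 t * κ 2 t * (deriv (κ 3) t) * κ 4 t + κ 1 t * κ 2 t * κ 3 t * (deriv (κ 4) t)) • e 5 t
      + (κ 1 t * κ 2 t * κ 3 t * κ 4 t * κ 5 t) • e 6 t := by
  -- smoothness of curvatures and derivatives
  have hk0 : ContDiff ℝ ∞ (κ 1) := (hκ_smooth 1 le_rfl (by omega)).of_le (by simp)
  have hk1s : ContDiff ℝ ∞ (deriv (κ 1)) := (contDiff_infty_iff_deriv.mp hk0).2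
  have hk2s : ContDiff ℝ ∞ (deriv (deriv (κ 1))) := (contDiff_infty_iff_deriv.mp hk1s).2
  have hk3s : ContDiff ℝ ∞ (deriv (deriv (deriv (κ 1)))) := (contDiff_infty_iff_deriv.mp hk2s).2
  have hl0 : ContDiff ℝ ∞ (κ 2) := (hκ_smooth 2 (by omega) (by omega)).of_le (by simp)
  have hl1s : ContDiff ℝ ∞ (deriv (κ 2)) := (contDiff_infty_iff_deriv.mp hl0).2
  have hl2s : ContDiff ℝ ∞ (deriv (deriv (κ 2))) := (contDiff_infty_iff_deriv.mp hl1s).2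
  have hp0 : ContDiff ℝ ∞ (κ 3) := (hκ_smooth 3 (by omega) (by omega)).of_le (by simp)
  have hp1s : ContDiff ℝ ∞ (deriv (κ 3)) := (contDiff_infty_iff_deriv.mp hp0).2
  have hq0 : ContDiff ℝ ∞ (κ 4) := (hκ_smooth 4 (by omega) (by omega)).of_le (by simp)
  have hK0 : ∀ t, HasDerivAt (κ 1) (deriv (κ 1) t) t :=
    fun t => ((contDiff_infty_iff_deriv.mp hk0).1 t).hasDerivAt
  have hK1 : ∀ t, HasDerivAt (deriv (κ 1)) (deriv (deriv (κ 1)) t) t :=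
    fun t => ((contDiff_infty_iff_deriv.mp hk1s).1 t).hasDerivAt
  have hK2 : ∀ t, HasDerivAt (deriv (deriv (κ 1))) (deriv (deriv (deriv (κ 1))) t) t :=
    fun t => ((contDiff_infty_iff_deriv.mp hk2s).1 t).hasDerivAt
  have hK3 : ∀ t, HasDerivAt (deriv (deriv (deriv (κ 1)))) (deriv (deriv (deriv (deriv (κ 1)))) t) t :=
    fun t => ((contDiff_infty_iff_deriv.mp hk3s).1 t).hasDerivAt
  have hL0 : ∀ t, HasDerivAt (κ 2) (deriv (κ 2) t) t :=
    fun t => ((contDiff_infty_iff_deriv.mp hl0).1 t).hasDerivAt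
  have hL1 : ∀ t, HasDerivAt (deriv (κ 2)) (deriv (deriv (κ 2)) t) t :=
    fun t => ((contDiff_infty_iff_deriv.mp hl1s).1 t).hasDerivAt
  have hL2 : ∀ t, HasDerivAt (deriv (deriv (κ 2))) (deriv (deriv (deriv (κ 2))) t) t :=
    fun t => ((contDiff_infty_iff_deriv.mp hl2s).1 t).hasDerivAt
  have hP0 : ∀ t, HasDerivAt (κ 3) (deriv (κ 3) t) t :=
    fun t => ((contDiff_infty_iff_deriv.mp hp0).1 t).hasDerivAt
  have hP1 : ∀ t, HasDerivAt (deriv (κ 3)) (deriv (deriv (κ 3)) t) t :=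
    fun t => ((contDiff_infty_iff_deriv.mp hp1s).1 t).hasDerivAt
  have hQ0 : ∀ t, HasDerivAt (κ 4) (deriv (κ 4) t) t :=
    fun t => ((contDiff_infty_iff_deriv.mp hq0).1 t).hasDerivAt
  -- Frenet equations as HasDerivAt
  have hediff : ∀ i, 1 ≤ i → i ≤ m → ∀ t, HasDerivAt (e i) (deriv (e i) t) t := fun i h1 h2 t =>
    (((he_smooth i h1 h2).differentiable (by simp)) t).hasDerivAt
  have hE1 : ∀ t, HasDerivAt (e 1) (κ 1 t • e 2 t) t :=
    fun t => hFrenet_one t ▸ hediff 1 le_rfl (by omega) t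
  have hE2 : ∀ t, HasDerivAt (e 2) (-(κ 1 t • e 1 t) + κ 2 t • e 3 t) t := by
    intro t
    have h := hFrenet 2 le_rfl (by omega) t
    norm_num at h
    exact h ▸ hediff 2 (by omega) (by omega) t
  have hE3 : ∀ t, HasDerivAt (e 3) (-(κ 2 t • e 2 t) + κ 3 t • e 4 t) t := by
    intro t
    have h := hFrenet 3 (by omega) (by omega) t
    norm_num at h
    exact h ▸ hediff 3 (by omega) (by omega) t
  have hE4 : ∀ t, HasDerivAt (e 4) (-(κ 3 t • e 3 t) + κ 4 t • e 5 t) t := by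
    intro t
    have h := hFrenet 4 (by omega) (by omega) t
    norm_num at h
    exact h ▸ hediff 4 (by omega) (by omega) t
  have hE5 : ∀ t, HasDerivAt (e 5) (-(κ 4 t • e 4 t) + κ 5 t • e 6 t) t := by
    intro t
    have h := hFrenet 5 (by omega) (by omega) t
    norm_num at h
    exact h ▸ hediff 5 (by omega) (by omega) t
  have H1 : deriv (fun s => κ 1 s • e 2 s) = (fun t => (-(κ 1 t ^ 2)) • e 1 t + (deriv (κ 1) t) • e 2 t + (κ 1 t * κ 2 t) • e 3 t) := by
    funext t
    erw [HasDerivAt.deriv ((hK0 t).smul (hE2 t))]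
    match_scalars <;> ring
  have H2 : deriv (fun t => (-(κ 1 t ^ 2)) • e 1 t + (deriv (κ 1) t) • e 2 t + (κ 1 t * κ 2 t) • e 3 t) = (fun t => (-(3 * κ 1 t * deriv (κ 1) t)) • e 1 t + (deriv (deriv (κ 1)) t - κ 1 t ^ 3 - κ 1 t * κ 2 t ^ 2) • e 2 t + (2 * deriv (κ 1) t * κ 2 t + κ 1 t * deriv (κ 2) t) • e 3 t + (κ 1 t * κ 2 t * κ 3 t) • e 4 t) := by
    funext t
    erw [HasDerivAt.deriv ((((((hK0 t).pow 2).neg).smul (hE1 t)).add ((hK1 t).smul (hE2 t))).add (((hK0 t).mul (hL0 t)).smul (hE3 t)))]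
    simp only [Pi.mul_apply, Pi.pow_apply, Pi.neg_apply, Pi.sub_apply, Pi.add_apply]
    match_scalars <;> ring
  have H3 : deriv (fun t => (-(3 * κ 1 t * deriv (κ 1) t)) • e 1 t + (deriv (deriv (κ 1)) t - κ 1 t ^ 3 - κ 1 t * κ 2 t ^ 2) • e 2 t + (2 * deriv (κ 1) t * κ 2 t + κ 1 t * deriv (κ 2) t) • e 3 t + (κ 1 t * κ 2 t * κ 3 t) • e 4 t) = (fun t => (-(3 * deriv (κ 1) t ^ 2) - 4 * κ 1 t * deriv (deriv (κ 1)) t + κ 1 t ^ 4 + κ 1 t ^ 2 * κ 2 t ^ 2) • e 1 t + (deriv (deriv (deriv (κ 1))) t - 6 * κ 1 t ^ 2 * deriv (κ 1) t - 3 * deriv (κ 1) t * κ 2 t ^ 2 - 3 * κ 1 t * κ 2 t * deriv (κ 2) t) • e 2 t + (3 * deriv (deriv (κ 1)) t * κ 2 t - κ 1 t ^ 3 * κ 2 t - κ 1 t * κ 2 t ^ 3 + 3 * deriv (κ 1) t * deriv (κ 2) t + κ 1 t * deriv (deriv (κ 2)) t - κ 1 t * κ 2 t * κ 3 t ^ 2)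 • e 3 t + (3 * deriv (κ 1) t * κ 2 t * κ 3 t + 2 * κ 1 t * deriv (κ 2) t * κ 3 t + κ 1 t * κ 2 t * deriv (κ 3) t) • e 4 t + (κ 1 t * κ 2 t * κ 3 t * κ 4 t) • e 5 t) := by
    funext t
    erw [HasDerivAt.deriv (((((((HasDerivAt.const_mul (3 : ℝ) (hK0 t)).mul (hK1 t)).neg).smul (hE1 t)).add ((((hK2 t).sub ((hK0 t).pow 3)).sub ((hK0 t).mul ((hL0 t).pow 2))).smul (hE2 t))).add ((((HasDerivAt.const_mul (2 : ℝ) (hK1 t)).mul (hL0 t)).add ((hK0 t).mul (hL1 t))).smul (hE3 t))).add ((((hK0 t).mul (hL0 t)).mul (hP0 t)).smul (hE4 t)))]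
    simp only [Pi.mul_apply, Pi.pow_apply, Pi.neg_apply, Pi.sub_apply, Pi.add_apply]
    match_scalars <;> ring
  intro t
  simp only [itd_four, itd_three, itd_two]
  erw [H1, H2, H3, HasDerivAt.deriv ((((((((((HasDerivAt.const_mul (3 : ℝ) ((hK1 t).pow 2)).neg).sub ((HasDerivAt.const_mul (4 : ℝ) (hK0 t)).mul (hK2 t))).add ((hK0 t).pow 4)).add (((hK0 t).pow 2).mul ((hL0 t).pow 2))).smul (hE1 t)).add (((((hK3 t).sub ((HasDerivAt.const_mul (6 : ℝ) ((hK0 t).pow 2)).mul (hK1 t))).sub ((HasDerivAt.const_mul (3 : ℝ) (hK1 t)).mul ((hL0 t).pow 2))).sub (((HasDerivAt.const_mul (3 : ℝ) (hK0 t)).mul (hL0 t)).mul (hL1 t))).smul (hE2 t))).add ((((((((HasDerivAt.const_mul (3 : ℝ) (hK2 t)).mul (hL0 t)).sub (((hK0 t).pow 3).mul (hL0 t))).sub ((hK0 t).mul ((hL0 t).pow 3))).add ((HasDerivAt.const_mul (3 : ℝ) (hK1 t)).mul (hL1 t))).add ((hK0 t).mul (hL2 t))).sub (((hK0 t).mul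 (hL0 t)).mul ((hP0 t).pow 2))).smul (hE3 t))).add ((((((HasDerivAt.const_mul (3 : ℝ) (hK1 t)).mul (hL0 t)).mul (hP0 t)).add (((HasDerivAt.const_mul (2 : ℝ) (hK0 t)).mul (hL1 t)).mul (hP0 t))).add (((hK0 t).mul (hL0 t)).mul (hP1 t))).smul (hE4 t))).add (((((hK0 t).mul (hL0 t)).mul (hP0 t)).mul (hQ0 t)).smul (hE5 t)))]
  simp only [Pi.mul_apply, Pi.pow_apply, Pi.neg_apply, Pi.sub_apply, Pi.add_apply]
  match_scalars <;> ring
end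
end

section
/- Suppose γ admits a Frenet system e₁, …, e_m of length m ≥ 6 with curvatures κ₁, …, κ_{m−1}. Then γ is 3-harmonic, i.e. the sixth derivative γ⁽⁶⁾ vanishes identically, if and only if the following six identities hold identically on ℝ: (1) −2κ₁′κ₁″ − κ₁κ₁‴ + 2κ₁³κ₁′ + κ₁κ₁′κ₂² + κ₁²κ₂κ₂′ = 0; (2) −15κ₁(κ₁′)² − 10κ₁²κ₁″ + κ₁⁵ + 2κ₁³κ₂² + κ₁⁽⁴⁾ − 6κ₁″κ₂² − 12κ₁′κ₂κ₂′ − 3κ₁(κ₂′)² − 4κ₁κ₂κ₂″ + κ₁κ₂⁴ + κ₁κ₂²κ₃² = 0; (3) 4κ₁‴κ₂ − 9κ₁²κ₁′κ₂ − 4κ₁′κ₂³ − 6κ₁κ₂²κ₂′ + 6κ₁″κ₂′ − κ₁³κ₂′ + 4κ₁′κ₂″ + κ₁κ₂‴ − 4κ₁′κ₂κ₃² − 3κ₁κ₂′κ₃² − 3κ₁κ₂κ₃κ₃′ = 0; (4) 6κ₁″κ₂κ₃ − κ₁³κ₂κ₃ − κ₁κ₂³κ₃ + 8κ₁′κ₂′κ₃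 + 3κ₁κ₂″κ₃ − κ₁κ₂κ₃³ + 4κ₁′κ₂κ₃′ + 3κ₁κ₂′κ₃′ + κ₁κ₂κ₃″ − κ₁κ₂κ₃κ₄² = 0; (5) 4κ₁′κ₂κ₃κ₄ + 3κ₁κ₂′κ₃κ₄ + 2κ₁κ₂κ₃′κ₄ + κ₁κ₂κ₃κ₄′ = 0; (6) κ₁κ₂κ₃κ₄κ₅ = 0. -/
open scoped RealInnerProductSpace
open scoped ContDiff

noncomputable section

lemma aux_hasDerivAt_iteratedDeriv {f : ℝ → ℝ} (hf : ContDiff ℝ (⊤ : ℕ∞) f) (k : ℕ) (t : ℝ) :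
    HasDerivAt (iteratedDeriv k f) (iteratedDeriv (k+1) f t) t := by
  have hs : ContDiff ℝ ∞ (iteratedDeriv k f) := by
    rw [iteratedDeriv_eq_iterate]
    exact ContDiff.iterate_deriv k (hf.of_le (by simp))
  rw [iteratedDeriv_succ]
  exact ((hs.differentiable (by simp)) t).hasDerivAt

lemma aux_step {E : Type*} [NormedAddCommGroup E] [NormedSpace ℝ E]
    {e1 e2 e3 e4 e5 e6 : ℝ → E} {K1 K2 K3 K4 K5 : ℝ}
    {a1 a2 a3 a4 a5 : ℝ → ℝ} {B1 B2 B3 B4 B5 : ℝ} {t : ℝ}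
    (h1 : HasDerivAt e1 (K1 • e2 t) t)
    (h2 : HasDerivAt e2 (-K1 • e1 t + K2 • e3 t) t)
    (h3 : HasDerivAt e3 (-K2 • e2 t + K3 • e4 t) t)
    (h4 : HasDerivAt e4 (-K3 • e3 t + K4 • e5 t) t)
    (h5 : HasDerivAt e5 (-K4 • e4 t + K5 • e6 t) t)
    (ha1 : HasDerivAt a1 B1 t) (ha2 : HasDerivAt a2 B2 t)
    (ha3 : HasDerivAt a3 B3 t) (ha4 : HasDerivAt a4 B4 t)
    (ha5 : HasDerivAt a5 B5 t) :
    HasDerivAt (fun s => a1 s • e1 s + a2 s • e2 s + a3 s • e3 s + a4 s • e4 s + a5 s • e5 s)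
      ((B1 - K1 * a2 t) • e1 t + (B2 + K1 * a1 t - K2 * a3 t) • e2 t
        + (B3 + K2 * a2 t - K3 * a4 t) • e3 t
        + (B4 + K3 * a3 t - K4 * a5 t) • e4 t
        + (B5 + K4 * a4 t) • e5 t + (K5 * a5 t) • e6 t) t := by
  have H := ((((ha1.smul h1).add (ha2.smul h2)).add (ha3.smul h3)).add (ha4.smul h4)).add (ha5.smul h5)
  convert H using 1
  · funext s; rfl
  · module

theorem stmt_13 (n : ℕ) (hn : 1 ≤ n) (γ : ℝ → EuclideanSpace ℝ (Fin n))
    (hγ : ContDiff ℝ (⊤ : ℕ∞) γ)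
    (harc : ∀ t, ⟪deriv γ t, deriv γ t⟫ = 1)
    (m : ℕ) (hm : 6 ≤ m)
    (e : ℕ → ℝ → EuclideanSpace ℝ (Fin n)) (κ : ℕ → ℝ → ℝ)
    (he_smooth : ∀ i, 1 ≤ i → i ≤ m → ContDiff ℝ (⊤ : ℕ∞) (e i))
    (hκ_smooth : ∀ i, 1 ≤ i → i ≤ m - 1 → ContDiff ℝ (⊤ : ℕ∞) (κ i))
    (he_orthonormal : ∀ i j, 1 ≤ i → i ≤ m → 1 ≤ j → j ≤ m → ∀ t,
      ⟪e i t, e j t⟫ = if i = j then (1 : ℝ) else 0)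
    (he_one : e 1 = deriv γ)
    (hFrenet_one : ∀ t, deriv (e 1) t = κ 1 t • e 2 t)
    (hFrenet : ∀ i, 2 ≤ i → i ≤ m - 1 → ∀ t,
      deriv (e i) t = -(κ (i-1) t) • e (i-1) t + κ i t • e (i+1) t) :
    (∀ t, iteratedDeriv 6 γ t = 0) ↔
      ((∀ t, -2 * (deriv (κ 1) t) * (iteratedDeriv 2 (κ 1) t) - κ 1 t * (iteratedDeriv 3 (κ 1) t) + 2 * (κ 1 t)^3 * (deriv (κ 1) t) + κ 1 t * (deriv (κ 1) t) * (κ 2 t)^2 + (κ 1 t)^2 * κ 2 t * (deriv (κ 2) t) = 0) ∧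
       (∀ t, (-15 * κ 1 t * (deriv (κ 1) t)^2 - 10 * (κ 1 t)^2 * (iteratedDeriv 2 (κ 1) t) + (κ 1 t)^5 + 2 * (κ 1 t)^3 * (κ 2 t)^2 + (iteratedDeriv 4 (κ 1) t) - 6 * (iteratedDeriv 2 (κ 1) t) * (κ 2 t)^2 - 12 * (deriv (κ 1) t) * κ 2 t * (deriv (κ 2) t) - 3 * κ 1 t * (deriv (κ 2) t)^2 - 4 * κ 1 t * κ 2 t * (iteratedDeriv 2 (κ 2) t) + κ 1 t * (κ 2 t)^4 + κ 1 t * (κ 2 t)^2 * (κ 3 t)^2) = 0) ∧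
       (∀ t, (4 * (iteratedDeriv 3 (κ 1) t) * κ 2 t - 9 * (κ 1 t)^2 * (deriv (κ 1) t) * κ 2 t - 4 * (deriv (κ 1) t) * (κ 2 t)^3 - 6 * κ 1 t * (κ 2 t)^2 * (deriv (κ 2) t) + 6 * (iteratedDeriv 2 (κ 1) t) * (deriv (κ 2) t) - (κ 1 t)^3 * (deriv (κ 2) t) + 4 * (deriv (κ 1) t) * (iteratedDeriv 2 (κ 2) t) + κ 1 t * (iteratedDeriv 3 (κ 2) t) - 4 * (deriv (κ 1) t) * κ 2 t * (κ 3 t)^2 - 3 * κ 1 t * (deriv (κ 2) t) * (κ 3 t)^2 - 3 * κ 1 t * κ 2 t * κ 3 t * (deriv (κ 3) t)) = 0) ∧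
       (∀ t, (6 * (iteratedDeriv 2 (κ 1) t) * κ 2 t * κ 3 t - (κ 1 t)^3 * κ 2 t * κ 3 t - κ 1 t * (κ 2 t)^3 * κ 3 t + 8 * (deriv (κ 1) t) * (deriv (κ 2) t) * κ 3 t + 3 * κ 1 t * (iteratedDeriv 2 (κ 2) t) * κ 3 t - κ 1 t * κ 2 t * (κ 3 t)^3 + 4 * (deriv (κ 1) t) * κ 2 t * (deriv (κ 3) t) + 3 * κ 1 t * (deriv (κ 2) t) * (deriv (κ 3) t) + κ 1 t * κ 2 t * (iteratedDeriv 2 (κ 3) t) - κ 1 t * κ 2 t * κ 3 t * (κ 4 t)^2) = 0) ∧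
       (∀ t, (4 * (deriv (κ 1) t) * κ 2 t * κ 3 t * κ 4 t + 3 * κ 1 t * (deriv (κ 2) t) * κ 3 t * κ 4 t + 2 * κ 1 t * κ 2 t * (deriv (κ 3) t) * κ 4 t + κ 1 t * κ 2 t * κ 3 t * (deriv (κ 4) t)) = 0) ∧
       (∀ t, (κ 1 t * κ 2 t * κ 3 t * κ 4 t * κ 5 t) = 0)) := by
  have hkz : ∀ t : ℝ, HasDerivAt (fun _ : ℝ => (0:ℝ)) 0 t := fun t => hasDerivAt_const t 0
  have hk1 : ∀ t, HasDerivAt (κ 1) (deriv (κ 1) t) t := by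
    intro t
    have h := aux_hasDerivAt_iteratedDeriv (hκ_smooth 1 (by norm_num) (by omega)) 0 t
    simpa only [zero_add, iteratedDeriv_zero, iteratedDeriv_one] using h
  have hk1d1 : ∀ t, HasDerivAt (deriv (κ 1)) (iteratedDeriv 2 (κ 1) t) t := by
    intro t
    have h := aux_hasDerivAt_iteratedDeriv (hκ_smooth 1 (by norm_num) (by omega)) 1 t
    simpa only [iteratedDeriv_one] using h
  have hk1d2 : ∀ t, HasDerivAt (iteratedDeriv 2 (κ 1)) (iteratedDeriv 3 (κ 1) t) t :=
    fun t => aux_hasDerivAt_iteratedDeriv (hκ_smooth 1 (by norm_num) (by omega)) 2 t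
  have hk1d3 : ∀ t, HasDerivAt (iteratedDeriv 3 (κ 1)) (iteratedDeriv 4 (κ 1) t) t :=
    fun t => aux_hasDerivAt_iteratedDeriv (hκ_smooth 1 (by norm_num) (by omega)) 3 t
  have hk2 : ∀ t, HasDerivAt (κ 2) (deriv (κ 2) t) t := by
    intro t
    have h := aux_hasDerivAt_iteratedDeriv (hκ_smooth 2 (by norm_num) (by omega)) 0 t
    simpa only [zero_add, iteratedDeriv_zero, iteratedDeriv_one] using h
  have hk2d1 : ∀ t, HasDerivAt (deriv (κ 2)) (iteratedDeriv 2 (κ 2) t) t := by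
    intro t
    have h := aux_hasDerivAt_iteratedDeriv (hκ_smooth 2 (by norm_num) (by omega)) 1 t
    simpa only [iteratedDeriv_one] using h
  have hk2d2 : ∀ t, HasDerivAt (iteratedDeriv 2 (κ 2)) (iteratedDeriv 3 (κ 2) t) t :=
    fun t => aux_hasDerivAt_iteratedDeriv (hκ_smooth 2 (by norm_num) (by omega)) 2 t
  have hk3 : ∀ t, HasDerivAt (κ 3) (deriv (κ 3) t) t := by
    intro t
    have h := aux_hasDerivAt_iteratedDeriv (hκ_smooth 3 (by norm_num) (by omega)) 0 t
    simpa only [zero_add, iteratedDeriv_zero, iteratedDeriv_one] using h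
  have hk3d1 : ∀ t, HasDerivAt (deriv (κ 3)) (iteratedDeriv 2 (κ 3) t) t := by
    intro t
    have h := aux_hasDerivAt_iteratedDeriv (hκ_smooth 3 (by norm_num) (by omega)) 1 t
    simpa only [iteratedDeriv_one] using h
  have hk4 : ∀ t, HasDerivAt (κ 4) (deriv (κ 4) t) t := by
    intro t
    have h := aux_hasDerivAt_iteratedDeriv (hκ_smooth 4 (by norm_num) (by omega)) 0 t
    simpa only [zero_add, iteratedDeriv_zero, iteratedDeriv_one] using h
  have he1 : ∀ t, HasDerivAt (e 1) (κ 1 t • e 2 t) t := by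
    intro t
    have h := (((he_smooth 1 (by norm_num) (by omega)).differentiable (by simp)) t).hasDerivAt
    rwa [hFrenet_one t] at h
  have he2 : ∀ t, HasDerivAt (e 2) (-(κ 1 t) • e 1 t + κ 2 t • e 3 t) t := by
    intro t
    have h := (((he_smooth 2 (by norm_num) (by omega)).differentiable (by simp)) t).hasDerivAt
    rw [hFrenet 2 (by norm_num) (by omega) t] at h
    exact h
  have he3 : ∀ t, HasDerivAt (e 3) (-(κ 2 t) • e 2 t + κ 3 t • e 4 t) t := by
    intro t
    have h := (((he_smooth 3 (by norm_num) (by omega)).differentiable (by simp)) t).hasDerivAt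
    rw [hFrenet 3 (by norm_num) (by omega) t] at h
    exact h
  have he4 : ∀ t, HasDerivAt (e 4) (-(κ 3 t) • e 3 t + κ 4 t • e 5 t) t := by
    intro t
    have h := (((he_smooth 4 (by norm_num) (by omega)).differentiable (by simp)) t).hasDerivAt
    rw [hFrenet 4 (by norm_num) (by omega) t] at h
    exact h
  have he5 : ∀ t, HasDerivAt (e 5) (-(κ 4 t) • e 4 t + κ 5 t • e 6 t) t := by
    intro t
    have h := (((he_smooth 5 (by norm_num) (by omega)).differentiable (by simp)) t).hasDerivAt
    rw [hFrenet 5 (by norm_num) (by omega) t] at h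
    exact h
  have hA3_1 : ∀ t, HasDerivAt (fun s => (-1 : ℝ) * (κ 1 s * κ 1 s)) (((-1 : ℝ) * (deriv (κ 1) t * κ 1 t + κ 1 t * deriv (κ 1) t))) t :=
    fun t => (HasDerivAt.const_mul ((-1 : ℝ)) ((hk1 t).mul (hk1 t)))
  have hA3_3 : ∀ t, HasDerivAt (fun s => κ 1 s * κ 2 s) ((deriv (κ 1) t * κ 2 t + κ 1 t * deriv (κ 2) t)) t :=
    fun t => ((hk1 t).mul (hk2 t))
  have hA4_1 : ∀ t, HasDerivAt (fun s => (-3 : ℝ) * (κ 1 s * deriv (κ 1) s)) (((-3 : ℝ) * (deriv (κ 1) t * deriv (κ 1) t + κ 1 t * iteratedDeriv 2 (κ 1) t))) t :=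
    fun t => (HasDerivAt.const_mul ((-3 : ℝ)) ((hk1 t).mul (hk1d1 t)))
  have hA4_2 : ∀ t, HasDerivAt (fun s => (-1 : ℝ) * (κ 1 s * κ 1 s * κ 1 s) + (-1 : ℝ) * (κ 1 s * κ 2 s * κ 2 s) + iteratedDeriv 2 (κ 1) s) (((((-1 : ℝ) * ((deriv (κ 1) t * κ 1 t + κ 1 t * deriv (κ 1) t) * κ 1 t + κ 1 t * κ 1 t * deriv (κ 1) t)) + ((-1 : ℝ) * ((deriv (κ 1) t * κ 2 t + κ 1 t * deriv (κ 2) t) * κ 2 t + κ 1 t * κ 2 t * deriv (κ 2) t))) + iteratedDeriv 3 (κ 1) t)) t :=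
    fun t => (((HasDerivAt.const_mul ((-1 : ℝ)) (((hk1 t).mul (hk1 t)).mul (hk1 t))).add (HasDerivAt.const_mul ((-1 : ℝ)) (((hk1 t).mul (hk2 t)).mul (hk2 t)))).add (hk1d2 t))
  have hA4_3 : ∀ t, HasDerivAt (fun s => κ 1 s * deriv (κ 2) s + (2 : ℝ) * (deriv (κ 1) s * κ 2 s)) (((deriv (κ 1) t * deriv (κ 2) t + κ 1 t * iteratedDeriv 2 (κ 2) t) + ((2 : ℝ) * (iteratedDeriv 2 (κ 1) t * κ 2 t + deriv (κ 1) t * deriv (κ 2) t)))) t :=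
    fun t => (((hk1 t).mul (hk2d1 t)).add (HasDerivAt.const_mul ((2 : ℝ)) ((hk1d1 t).mul (hk2 t))))
  have hA4_4 : ∀ t, HasDerivAt (fun s => κ 1 s * κ 2 s * κ 3 s) (((deriv (κ 1) t * κ 2 t + κ 1 t * deriv (κ 2) t) * κ 3 t + κ 1 t * κ 2 t * deriv (κ 3) t)) t :=
    fun t => (((hk1 t).mul (hk2 t)).mul (hk3 t))
  have hA5_1 : ∀ t, HasDerivAt (fun s => κ 1 s * κ 1 s * κ 1 s * κ 1 s + κ 1 s * κ 1 s * κ 2 s * κ 2 s + (-4 : ℝ) * (κ 1 s * iteratedDeriv 2 (κ 1) s) + (-3 : ℝ) * (deriv (κ 1) s * deriv (κ 1) s)) (((((((deriv (κ 1) t * κ 1 t + κ 1 t * deriv (κ 1) t) * κ 1 t + κ 1 t * κ 1 t * deriv (κ 1) t) * κ 1 t + κ 1 t * κ 1 t * κ 1 t * deriv (κ 1) t) + (((deriv (κ 1) t * κ 1 t + κ 1 t * deriv (κ 1) t) * κ 2 t + κ 1 t * κ 1 t * deriv (κ 2) t) * κ 2 t + κ 1 t * κ 1 t * κ 2 t *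 deriv (κ 2) t)) + ((-4 : ℝ) * (deriv (κ 1) t * iteratedDeriv 2 (κ 1) t + κ 1 t * iteratedDeriv 3 (κ 1) t))) + ((-3 : ℝ) * (iteratedDeriv 2 (κ 1) t * deriv (κ 1) t + deriv (κ 1) t * iteratedDeriv 2 (κ 1) t)))) t :=
    fun t => (((((((hk1 t).mul (hk1 t)).mul (hk1 t)).mul (hk1 t)).add ((((hk1 t).mul (hk1 t)).mul (hk2 t)).mul (hk2 t))).add (HasDerivAt.const_mul ((-4 : ℝ)) ((hk1 t).mul (hk1d2 t)))).add (HasDerivAt.const_mul ((-3 : ℝ)) ((hk1d1 t).mul (hk1d1 t))))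
  have hA5_2 : ∀ t, HasDerivAt (fun s => (-6 : ℝ) * (κ 1 s * κ 1 s * deriv (κ 1) s) + (-3 : ℝ) * (κ 1 s * κ 2 s * deriv (κ 2) s) + (-3 : ℝ) * (deriv (κ 1) s * κ 2 s * κ 2 s) + iteratedDeriv 3 (κ 1) s) ((((((-6 : ℝ) * ((deriv (κ 1) t * κ 1 t + κ 1 t * deriv (κ 1) t) * deriv (κ 1) t + κ 1 t * κ 1 t * iteratedDeriv 2 (κ 1) t)) + ((-3 : ℝ) * ((deriv (κ 1) t * κ 2 t + κ 1 t * deriv (κ 2) t) * deriv (κ 2) t + κ 1 t * κ 2 t * iteratedDeriv 2 (κ 2) t))) + ((-3 : ℝ) * ((iteratedDeriv 2 (κ 1) t * κ 2 t + deriv (κ 1) t * deriv (κ 2) t) * κ 2 t + deriv (κ 1) t * κ 2 t * deriv (κ 2) t))) + iteratedDeriv 4 (κ 1) t)) t :=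
    fun t => ((((HasDerivAt.const_mul ((-6 : ℝ)) (((hk1 t).mul (hk1 t)).mul (hk1d1 t))).add (HasDerivAt.const_mul ((-3 : ℝ)) (((hk1 t).mul (hk2 t)).mul (hk2d1 t)))).add (HasDerivAt.const_mul ((-3 : ℝ)) (((hk1d1 t).mul (hk2 t)).mul (hk2 t)))).add (hk1d3 t))
  have hA5_3 : ∀ t, HasDerivAt (fun s => (-1 : ℝ) * (κ 1 s * κ 1 s * κ 1 s * κ 2 s) + (-1 : ℝ) * (κ 1 s * κ 2 s * κ 2 s * κ 2 s) + (-1 : ℝ) * (κ 1 s * κ 2 s * κ 3 s * κ 3 s) + κ 1 s * iteratedDeriv 2 (κ 2) s + (3 : ℝ) * (deriv (κ 1) s * deriv (κ 2) s) + (3 : ℝ) * (iteratedDeriv 2 (κ 1) s * κ 2 s)) ((((((((-1 : ℝ) * (((deriv (κ 1) t * κ 1 t + κ 1 t * deriv (κ 1) t) * κ 1 t + κ 1 t * κ 1 t * deriv (κ 1) t) * κ 2 t + κ 1 t * κ 1 t * κ 1 t * deriv (κ 2) t)) + ((-1 : ℝ) * (((deriv (κ 1) t * κ 2 t + κ 1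 t * deriv (κ 2) t) * κ 2 t + κ 1 t * κ 2 t * deriv (κ 2) t) * κ 2 t + κ 1 t * κ 2 t * κ 2 t * deriv (κ 2) t))) + ((-1 : ℝ) * (((deriv (κ 1) t * κ 2 t + κ 1 t * deriv (κ 2) t) * κ 3 t + κ 1 t * κ 2 t * deriv (κ 3) t) * κ 3 t + κ 1 t * κ 2 t * κ 3 t * deriv (κ 3) t))) + (deriv (κ 1) t * iteratedDeriv 2 (κ 2) t + κ 1 t * iteratedDeriv 3 (κ 2) t)) + ((3 : ℝ) * (iteratedDeriv 2 (κ 1) t * deriv (κ 2) t + deriv (κ 1) t * iteratedDeriv 2 (κ 2) t))) + ((3 : ℝ) * (iteratedDeriv 3 (κ 1) t * κ 2 t + iteratedDeriv 2 (κ 1) t * deriv (κ 2) t)))) t :=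
    fun t => ((((((HasDerivAt.const_mul ((-1 : ℝ)) ((((hk1 t).mul (hk1 t)).mul (hk1 t)).mul (hk2 t))).add (HasDerivAt.const_mul ((-1 : ℝ)) ((((hk1 t).mul (hk2 t)).mul (hk2 t)).mul (hk2 t)))).add (HasDerivAt.const_mul ((-1 : ℝ)) ((((hk1 t).mul (hk2 t)).mul (hk3 t)).mul (hk3 t)))).add ((hk1 t).mul (hk2d2 t))).add (HasDerivAt.const_mul ((3 : ℝ)) ((hk1d1 t).mul (hk2d1 t)))).add (HasDerivAt.const_mul ((3 : ℝ)) ((hk1d2 t).mul (hk2 t))))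
  have hA5_4 : ∀ t, HasDerivAt (fun s => κ 1 s * κ 2 s * deriv (κ 3) s + (2 : ℝ) * (κ 1 s * deriv (κ 2) s * κ 3 s) + (3 : ℝ) * (deriv (κ 1) s * κ 2 s * κ 3 s)) (((((deriv (κ 1) t * κ 2 t + κ 1 t * deriv (κ 2) t) * deriv (κ 3) t + κ 1 t * κ 2 t * iteratedDeriv 2 (κ 3) t) + ((2 : ℝ) * ((deriv (κ 1) t * deriv (κ 2) t + κ 1 t * iteratedDeriv 2 (κ 2) t) * κ 3 t + κ 1 t * deriv (κ 2) t * deriv (κ 3) t))) + ((3 : ℝ) * ((iteratedDeriv 2 (κ 1) t * κ 2 t + deriv (κ 1) t * deriv (κ 2) t) * κ 3 t + deriv (κ 1) t * κ 2 t * deriv (κ 3) t)))) t :=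
    fun t => (((((hk1 t).mul (hk2 t)).mul (hk3d1 t)).add (HasDerivAt.const_mul ((2 : ℝ)) (((hk1 t).mul (hk2d1 t)).mul (hk3 t)))).add (HasDerivAt.const_mul ((3 : ℝ)) (((hk1d1 t).mul (hk2 t)).mul (hk3 t))))
  have hA5_5 : ∀ t, HasDerivAt (fun s => κ 1 s * κ 2 s * κ 3 s * κ 4 s) ((((deriv (κ 1) t * κ 2 t + κ 1 t * deriv (κ 2) t) * κ 3 t + κ 1 t * κ 2 t * deriv (κ 3) t) * κ 4 t + κ 1 t * κ 2 t * κ 3 t * deriv (κ 4) t)) t :=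
    fun t => ((((hk1 t).mul (hk2 t)).mul (hk3 t)).mul (hk4 t))
  have h2 : iteratedDeriv 2 γ = fun s => (fun _ => (0:ℝ)) s • e 1 s + κ 1 s • e 2 s + (fun _ => (0:ℝ)) s • e 3 s + (fun _ => (0:ℝ)) s • e 4 s + (fun _ => (0:ℝ)) s • e 5 s := by
    funext s
    rw [show iteratedDeriv 2 γ = deriv (iteratedDeriv 1 γ) from iteratedDeriv_succ,
        iteratedDeriv_one, ← he_one, (he1 s).deriv]
    module
  have h3 : iteratedDeriv 3 γ = fun s => (fun s => (-1 : ℝ) * (κ 1 s * κ 1 s)) s • e 1 s + deriv (κ 1) s • e 2 s + (fun s => κ 1 s * κ 2 s) s • e 3 s + (fun _ => (0:ℝ)) s • e 4 s + (fun _ => (0:ℝ)) s • e 5 s := by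
    funext s
    rw [show iteratedDeriv 3 γ = deriv (iteratedDeriv 2 γ) from iteratedDeriv_succ, h2,
        (aux_step (he1 s) (he2 s) (he3 s) (he4 s) (he5 s) (hkz s) (hk1 s) (hkz s) (hkz s) (hkz s)).deriv]
    module
  have h4 : iteratedDeriv 4 γ = fun s => (fun s => (-3 : ℝ) * (κ 1 s * deriv (κ 1) s)) s • e 1 s + (fun s => (-1 : ℝ) * (κ 1 s * κ 1 s * κ 1 s) + (-1 : ℝ) * (κ 1 s * κ 2 s * κ 2 s) + iteratedDeriv 2 (κ 1) s) s • e 2 s + (fun s => κ 1 s * deriv (κ 2) s + (2 : ℝ) * (deriv (κ 1) s * κ 2 s)) s • e 3 s + (fun s => κ 1 s * κ 2 s * κ 3 s) s • e 4 s + (fun _ => (0:ℝ)) s • e 5 s := by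
    funext s
    rw [show iteratedDeriv 4 γ = deriv (iteratedDeriv 3 γ) from iteratedDeriv_succ, h3,
        (aux_step (he1 s) (he2 s) (he3 s) (he4 s) (he5 s) (hA3_1 s) (hk1d1 s) (hA3_3 s) (hkz s) (hkz s)).deriv]
    module
  have h5 : iteratedDeriv 5 γ = fun s => (fun s => κ 1 s * κ 1 s * κ 1 s * κ 1 s + κ 1 s * κ 1 s * κ 2 s * κ 2 s + (-4 : ℝ) * (κ 1 s * iteratedDeriv 2 (κ 1) s) + (-3 : ℝ) * (deriv (κ 1) s * deriv (κ 1) s)) s • e 1 s + (fun s => (-6 : ℝ) * (κ 1 s * κ 1 s * deriv (κ 1) s) + (-3 : ℝ) * (κ 1 s * κ 2 s * deriv (κ 2) s) + (-3 : ℝ) * (deriv (κ 1) s * κ 2 s * κ 2 s) + iteratedDeriv 3 (κ 1) s) s • e 2 s + (fun s => (-1 : ℝ) * (κ 1 s * κ 1 s * κ 1 s * κ 2 s) + (-1 : ℝ) * (κ 1 s * κ 2 s * κ 2 s * κ 2 s) + (-1 : ℝ) * (κ 1 s * κ 2 s * κ 3 s * κ 3 s) + κ 1 s * iteratedDeriv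 2 (κ 2) s + (3 : ℝ) * (deriv (κ 1) s * deriv (κ 2) s) + (3 : ℝ) * (iteratedDeriv 2 (κ 1) s * κ 2 s)) s • e 3 s + (fun s => κ 1 s * κ 2 s * deriv (κ 3) s + (2 : ℝ) * (κ 1 s * deriv (κ 2) s * κ 3 s) + (3 : ℝ) * (deriv (κ 1) s * κ 2 s * κ 3 s)) s • e 4 s + (fun s => κ 1 s * κ 2 s * κ 3 s * κ 4 s) s • e 5 s := by
    funext s
    rw [show iteratedDeriv 5 γ = deriv (iteratedDeriv 4 γ) from iteratedDeriv_succ, h4,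
        (aux_step (he1 s) (he2 s) (he3 s) (he4 s) (he5 s) (hA4_1 s) (hA4_2 s) (hA4_3 s) (hA4_4 s) (hkz s)).deriv]
    module
  have h6 : iteratedDeriv 6 γ = fun s => ((10 : ℝ) * (κ 1 s * κ 1 s * κ 1 s * deriv (κ 1) s) + (5 : ℝ) * (κ 1 s * κ 1 s * κ 2 s * deriv (κ 2) s) + (5 : ℝ) * (κ 1 s * deriv (κ 1) s * κ 2 s * κ 2 s) + (-5 : ℝ) * (κ 1 s * iteratedDeriv 3 (κ 1) s) + (-10 : ℝ) * (deriv (κ 1) s * iteratedDeriv 2 (κ 1) s)) • e 1 s + ((1 : ℝ) * (κ 1 s * κ 1 s * κ 1 s * κ 1 s * κ 1 s) + (2 : ℝ) * (κ 1 s * κ 1 s * κ 1 s * κ 2 s * κ 2 s) + (-10 : ℝ) * (κ 1 s * κ 1 s * iteratedDeriv 2 (κ 1) s) + (-15 : ℝ) * (κ 1 s * deriv (κ 1) s * deriv (κ 1) s) + (1 : ℝ) * (κ 1 s * κ 2 s * κ 2 s * κ 2 s * κ 2 s) + (1 : ℝ) * (κ 1 s * κ 2 s * κ 2 s * κ 3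 s * κ 3 s) + (-4 : ℝ) * (κ 1 s * κ 2 s * iteratedDeriv 2 (κ 2) s) + (-3 : ℝ) * (κ 1 s * deriv (κ 2) s * deriv (κ 2) s) + (-12 : ℝ) * (deriv (κ 1) s * κ 2 s * deriv (κ 2) s) + (-6 : ℝ) * (iteratedDeriv 2 (κ 1) s * κ 2 s * κ 2 s) + (1 : ℝ) * (iteratedDeriv 4 (κ 1) s)) • e 2 s + ((-1 : ℝ) * (κ 1 s * κ 1 s * κ 1 s * deriv (κ 2) s) + (-9 : ℝ) * (κ 1 s * κ 1 s * deriv (κ 1) s * κ 2 s) + (-6 : ℝ) * (κ 1 s * κ 2 s * κ 2 s * deriv (κ 2) s) + (-3 : ℝ) * (κ 1 s * κ 2 s * κ 3 s * deriv (κ 3) s) + (-3 : ℝ) * (κ 1 s * deriv (κ 2) s * κ 3 s * κ 3 s) + (1 : ℝ) * (κ 1 s * iteratedDeriv 3 (κ 2) s) + (-4 : ℝ) * (deriv (κ 1) s * κ 2 s * κ 2 s * κ 2 s) + (-4 : ℝ) * (deriv (κ 1) s * κ 2 s * κ 3 s * κ 3 s) + (4 : ℝ) * (deriv (κ 1) s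 * iteratedDeriv 2 (κ 2) s) + (6 : ℝ) * (iteratedDeriv 2 (κ 1) s * deriv (κ 2) s) + (4 : ℝ) * (iteratedDeriv 3 (κ 1) s * κ 2 s)) • e 3 s + ((-1 : ℝ) * (κ 1 s * κ 1 s * κ 1 s * κ 2 s * κ 3 s) + (-1 : ℝ) * (κ 1 s * κ 2 s * κ 2 s * κ 2 s * κ 3 s) + (-1 : ℝ) * (κ 1 s * κ 2 s * κ 3 s * κ 3 s * κ 3 s) + (-1 : ℝ) * (κ 1 s * κ 2 s * κ 3 s * κ 4 s * κ 4 s) + (1 : ℝ) * (κ 1 s * κ 2 s * iteratedDeriv 2 (κ 3) s) + (3 : ℝ) * (κ 1 s * deriv (κ 2) s * deriv (κ 3) s) + (3 : ℝ) * (κ 1 s * iteratedDeriv 2 (κ 2) s * κ 3 s) + (4 : ℝ) * (deriv (κ 1) s * κ 2 s * deriv (κ 3) s) + (8 : ℝ) * (deriv (κ 1) s * deriv (κ 2) s * κ 3 s) + (6 : ℝ) * (iteratedDeriv 2 (κ 1) s * κ 2 s * κ 3 s)) • e 4 s + ((1 : ℝ) * (κ 1 s * κ 2 s * κ 3 s *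 deriv (κ 4) s) + (2 : ℝ) * (κ 1 s * κ 2 s * deriv (κ 3) s * κ 4 s) + (3 : ℝ) * (κ 1 s * deriv (κ 2) s * κ 3 s * κ 4 s) + (4 : ℝ) * (deriv (κ 1) s * κ 2 s * κ 3 s * κ 4 s)) • e 5 s + ((1 : ℝ) * (κ 1 s * κ 2 s * κ 3 s * κ 4 s * κ 5 s)) • e 6 s := by
    funext s
    rw [show iteratedDeriv 6 γ = deriv (iteratedDeriv 5 γ) from iteratedDeriv_succ, h5,
        (aux_step (he1 s) (he2 s) (he3 s) (he4 s) (he5 s) (hA5_1 s) (hA5_2 s) (hA5_3 s) (hA5_4 s) (hA5_5 s)).deriv]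
    module
  constructor
  · intro h0
    refine ⟨?_, ?_, ?_, ?_, ?_, ?_⟩
    · intro t
      have hs := h0 t
      rw [h6] at hs
      have hj := congrArg (fun v : EuclideanSpace ℝ (Fin n) => (inner ℝ v (e 1 t) : ℝ)) hs
      simp only [inner_add_left, real_inner_smul_left, inner_zero_left, he_orthonormal 1 1 (by norm_num) (by omega) (by norm_num) (by omega) t, he_orthonormal 2 1 (by norm_num) (by omega) (by norm_num) (by omega) t, he_orthonormal 3 1 (by norm_num) (by omega) (by norm_num) (by omega) t, he_orthonormal 4 1 (by norm_num) (by omega) (by norm_num) (by omega) t, he_orthonormal 5 1 (by norm_num) (by omega) (by norm_num) (by omega) t, he_orthonormal 6 1 (by norm_num) (by omega) (by norm_num) (by omega) t] at hj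
      norm_num [-mul_eq_zero] at hj
      linear_combination hj / 5
    · intro t
      have hs := h0 t
      rw [h6] at hs
      have hj := congrArg (fun v : EuclideanSpace ℝ (Fin n) => (inner ℝ v (e 2 t) : ℝ)) hs
      simp only [inner_add_left, real_inner_smul_left, inner_zero_left, he_orthonormal 1 2 (by norm_num) (by omega) (by norm_num) (by omega) t, he_orthonormal 2 2 (by norm_num) (by omega) (by norm_num) (by omega) t, he_orthonormal 3 2 (by norm_num) (by omega) (by norm_num) (by omega) t, he_orthonormal 4 2 (by norm_num) (by omega) (by norm_num) (by omega) t, he_orthonormal 5 2 (by norm_num) (by omega) (by norm_num) (by omega) t, he_orthonormal 6 2 (by norm_num) (by omega) (by norm_num) (by omega) t] at hj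
      norm_num [-mul_eq_zero] at hj
      linear_combination hj
    · intro t
      have hs := h0 t
      rw [h6] at hs
      have hj := congrArg (fun v : EuclideanSpace ℝ (Fin n) => (inner ℝ v (e 3 t) : ℝ)) hs
      simp only [inner_add_left, real_inner_smul_left, inner_zero_left, he_orthonormal 1 3 (by norm_num) (by omega) (by norm_num) (by omega) t, he_orthonormal 2 3 (by norm_num) (by omega) (by norm_num) (by omega) t, he_orthonormal 3 3 (by norm_num) (by omega) (by norm_num) (by omega) t, he_orthonormal 4 3 (by norm_num) (by omega) (by norm_num) (by omega) t, he_orthonormal 5 3 (by norm_num) (by omega) (by norm_num) (by omega) t, he_orthonormal 6 3 (by norm_num) (by omega) (by norm_num) (by omega) t] at hj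
      norm_num [-mul_eq_zero] at hj
      linear_combination hj
    · intro t
      have hs := h0 t
      rw [h6] at hs
      have hj := congrArg (fun v : EuclideanSpace ℝ (Fin n) => (inner ℝ v (e 4 t) : ℝ)) hs
      simp only [inner_add_left, real_inner_smul_left, inner_zero_left, he_orthonormal 1 4 (by norm_num) (by omega) (by norm_num) (by omega) t, he_orthonormal 2 4 (by norm_num) (by omega) (by norm_num) (by omega) t, he_orthonormal 3 4 (by norm_num) (by omega) (by norm_num) (by omega) t, he_orthonormal 4 4 (by norm_num) (by omega) (by norm_num) (by omega) t, he_orthonormal 5 4 (by norm_num) (by omega) (by norm_num) (by omega) t, he_orthonormal 6 4 (by norm_num) (by omega) (by norm_num) (by omega) t] at hj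
      norm_num [-mul_eq_zero] at hj
      linear_combination hj
    · intro t
      have hs := h0 t
      rw [h6] at hs
      have hj := congrArg (fun v : EuclideanSpace ℝ (Fin n) => (inner ℝ v (e 5 t) : ℝ)) hs
      simp only [inner_add_left, real_inner_smul_left, inner_zero_left, he_orthonormal 1 5 (by norm_num) (by omega) (by norm_num) (by omega) t, he_orthonormal 2 5 (by norm_num) (by omega) (by norm_num) (by omega) t, he_orthonormal 3 5 (by norm_num) (by omega) (by norm_num) (by omega) t, he_orthonormal 4 5 (by norm_num) (by omega) (by norm_num) (by omega) t, he_orthonormal 5 5 (by norm_num) (by omega) (by norm_num) (by omega) t, he_orthonormal 6 5 (by norm_num) (by omega) (by norm_num) (by omega) t] at hj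
      norm_num [-mul_eq_zero] at hj
      linear_combination hj
    · intro t
      have hs := h0 t
      rw [h6] at hs
      have hj := congrArg (fun v : EuclideanSpace ℝ (Fin n) => (inner ℝ v (e 6 t) : ℝ)) hs
      simp only [inner_add_left, real_inner_smul_left, inner_zero_left, he_orthonormal 1 6 (by norm_num) (by omega) (by norm_num) (by omega) t, he_orthonormal 2 6 (by norm_num) (by omega) (by norm_num) (by omega) t, he_orthonormal 3 6 (by norm_num) (by omega) (by norm_num) (by omega) t, he_orthonormal 4 6 (by norm_num) (by omega) (by norm_num) (by omega) t, he_orthonormal 5 6 (by norm_num) (by omega) (by norm_num) (by omega) t, he_orthonormal 6 6 (by norm_num) (by omega) (by norm_num) (by omega) t] at hj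
      norm_num [-mul_eq_zero] at hj
      linear_combination hj
  · rintro ⟨q1, q2, q3, q4, q5, q6⟩ t
    rw [h6]
    show ((10 : ℝ) * (κ 1 t * κ 1 t * κ 1 t * deriv (κ 1) t) + (5 : ℝ) * (κ 1 t * κ 1 t * κ 2 t * deriv (κ 2) t) + (5 : ℝ) * (κ 1 t * deriv (κ 1) t * κ 2 t * κ 2 t) + (-5 : ℝ) * (κ 1 t * iteratedDeriv 3 (κ 1) t) + (-10 : ℝ) * (deriv (κ 1) t * iteratedDeriv 2 (κ 1) t)) • e 1 t + ((1 : ℝ) * (κ 1 t * κ 1 t * κ 1 t * κ 1 t * κ 1 t) + (2 : ℝ) * (κ 1 t * κ 1 t * κ 1 t * κ 2 t * κ 2 t) + (-10 : ℝ) * (κ 1 t * κ 1 t * iteratedDeriv 2 (κ 1) t) + (-15 : ℝ) * (κ 1 t * deriv (κ 1) t * deriv (κ 1) t) + (1 : ℝ) * (κ 1 t * κ 2 t * κ 2 t * κ 2 t * κ 2 t) + (1 : ℝ) * (κ 1 t * κ 2 t * κ 2 t * κ 3 t * κ 3 t) + (-4 : ℝ) * (κ 1 t * κ 2 t * iteratedDeriv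 2 (κ 2) t) + (-3 : ℝ) * (κ 1 t * deriv (κ 2) t * deriv (κ 2) t) + (-12 : ℝ) * (deriv (κ 1) t * κ 2 t * deriv (κ 2) t) + (-6 : ℝ) * (iteratedDeriv 2 (κ 1) t * κ 2 t * κ 2 t) + (1 : ℝ) * (iteratedDeriv 4 (κ 1) t)) • e 2 t + ((-1 : ℝ) * (κ 1 t * κ 1 t * κ 1 t * deriv (κ 2) t) + (-9 : ℝ) * (κ 1 t * κ 1 t * deriv (κ 1) t * κ 2 t) + (-6 : ℝ) * (κ 1 t * κ 2 t * κ 2 t * deriv (κ 2) t) + (-3 : ℝ) * (κ 1 t * κ 2 t * κ 3 t * deriv (κ 3) t) + (-3 : ℝ) * (κ 1 t * deriv (κ 2) t * κ 3 t * κ 3 t) + (1 : ℝ) * (κ 1 t * iteratedDeriv 3 (κ 2) t) + (-4 : ℝ) * (deriv (κ 1) t * κ 2 t * κ 2 t * κ 2 t) + (-4 : ℝ) * (deriv (κ 1) t * κ 2 t * κ 3 t * κ 3 t) + (4 : ℝ) * (deriv (κ 1) t * iteratedDeriv 2 (κ 2) t) + (6 : ℝ) * (iteratedDeriv 2 (κ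 1) t * deriv (κ 2) t) + (4 : ℝ) * (iteratedDeriv 3 (κ 1) t * κ 2 t)) • e 3 t + ((-1 : ℝ) * (κ 1 t * κ 1 t * κ 1 t * κ 2 t * κ 3 t) + (-1 : ℝ) * (κ 1 t * κ 2 t * κ 2 t * κ 2 t * κ 3 t) + (-1 : ℝ) * (κ 1 t * κ 2 t * κ 3 t * κ 3 t * κ 3 t) + (-1 : ℝ) * (κ 1 t * κ 2 t * κ 3 t * κ 4 t * κ 4 t) + (1 : ℝ) * (κ 1 t * κ 2 t * iteratedDeriv 2 (κ 3) t) + (3 : ℝ) * (κ 1 t * deriv (κ 2) t * deriv (κ 3) t) + (3 : ℝ) * (κ 1 t * iteratedDeriv 2 (κ 2) t * κ 3 t) + (4 : ℝ) * (deriv (κ 1) t * κ 2 t * deriv (κ 3) t) + (8 : ℝ) * (deriv (κ 1) t * deriv (κ 2) t * κ 3 t) + (6 : ℝ) * (iteratedDeriv 2 (κ 1) t * κ 2 t * κ 3 t)) • e 4 t + ((1 : ℝ) * (κ 1 t * κ 2 t * κ 3 t * deriv (κ 4) t) + (2 : ℝ) * (κ 1 t * κ 2 t * deriv (κ 3) t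 * κ 4 t) + (3 : ℝ) * (κ 1 t * deriv (κ 2) t * κ 3 t * κ 4 t) + (4 : ℝ) * (deriv (κ 1) t * κ 2 t * κ 3 t * κ 4 t)) • e 5 t + ((1 : ℝ) * (κ 1 t * κ 2 t * κ 3 t * κ 4 t * κ 5 t)) • e 6 t = 0
    rw [show ((10 : ℝ) * (κ 1 t * κ 1 t * κ 1 t * deriv (κ 1) t) + (5 : ℝ) * (κ 1 t * κ 1 t * κ 2 t * deriv (κ 2) t) + (5 : ℝ) * (κ 1 t * deriv (κ 1) t * κ 2 t * κ 2 t) + (-5 : ℝ) * (κ 1 t * iteratedDeriv 3 (κ 1) t) + (-10 : ℝ) * (deriv (κ 1) t * iteratedDeriv 2 (κ 1) t)) = (0:ℝ) from by linear_combination (5:ℝ) * q1 t,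
        show ((1 : ℝ) * (κ 1 t * κ 1 t * κ 1 t * κ 1 t * κ 1 t) + (2 : ℝ) * (κ 1 t * κ 1 t * κ 1 t * κ 2 t * κ 2 t) + (-10 : ℝ) * (κ 1 t * κ 1 t * iteratedDeriv 2 (κ 1) t) + (-15 : ℝ) * (κ 1 t * deriv (κ 1) t * deriv (κ 1) t) + (1 : ℝ) * (κ 1 t * κ 2 t * κ 2 t * κ 2 t * κ 2 t) + (1 : ℝ) * (κ 1 t * κ 2 t * κ 2 t * κ 3 t * κ 3 t) + (-4 : ℝ) * (κ 1 t * κ 2 t * iteratedDeriv 2 (κ 2) t) + (-3 : ℝ) * (κ 1 t * deriv (κ 2) t * deriv (κ 2) t) + (-12 : ℝ) * (deriv (κ 1) t * κ 2 t * deriv (κ 2) t) + (-6 : ℝ) * (iteratedDeriv 2 (κ 1) t * κ 2 t * κ 2 t) + (1 : ℝ) * (iteratedDeriv 4 (κ 1) t)) = (0:ℝ) from by linear_combination q2 t,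
        show ((-1 : ℝ) * (κ 1 t * κ 1 t * κ 1 t * deriv (κ 2) t) + (-9 : ℝ) * (κ 1 t * κ 1 t * deriv (κ 1) t * κ 2 t) + (-6 : ℝ) * (κ 1 t * κ 2 t * κ 2 t * deriv (κ 2) t) + (-3 : ℝ) * (κ 1 t * κ 2 t * κ 3 t * deriv (κ 3) t) + (-3 : ℝ) * (κ 1 t * deriv (κ 2) t * κ 3 t * κ 3 t) + (1 : ℝ) * (κ 1 t * iteratedDeriv 3 (κ 2) t) + (-4 : ℝ) * (deriv (κ 1) t * κ 2 t * κ 2 t * κ 2 t) + (-4 : ℝ) * (deriv (κ 1) t * κ 2 t * κ 3 t * κ 3 t) + (4 : ℝ) * (deriv (κ 1) t * iteratedDeriv 2 (κ 2) t) + (6 : ℝ) * (iteratedDeriv 2 (κ 1) t * deriv (κ 2) t) + (4 : ℝ) * (iteratedDeriv 3 (κ 1) t * κ 2 t)) = (0:ℝ) from by linear_combination q3 t,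
        show ((-1 : ℝ) * (κ 1 t * κ 1 t * κ 1 t * κ 2 t * κ 3 t) + (-1 : ℝ) * (κ 1 t * κ 2 t * κ 2 t * κ 2 t * κ 3 t) + (-1 : ℝ) * (κ 1 t * κ 2 t * κ 3 t * κ 3 t * κ 3 t) + (-1 : ℝ) * (κ 1 t * κ 2 t * κ 3 t * κ 4 t * κ 4 t) + (1 : ℝ) * (κ 1 t * κ 2 t * iteratedDeriv 2 (κ 3) t) + (3 : ℝ) * (κ 1 t * deriv (κ 2) t * deriv (κ 3) t) + (3 : ℝ) * (κ 1 t * iteratedDeriv 2 (κ 2) t * κ 3 t) + (4 : ℝ) * (deriv (κ 1) t * κ 2 t * deriv (κ 3) t) + (8 : ℝ) * (deriv (κ 1) t * deriv (κ 2) t * κ 3 t) + (6 : ℝ) * (iteratedDeriv 2 (κ 1) t * κ 2 t * κ 3 t)) = (0:ℝ) from by linear_combination q4 t,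
        show ((1 : ℝ) * (κ 1 t * κ 2 t * κ 3 t * deriv (κ 4) t) + (2 : ℝ) * (κ 1 t * κ 2 t * deriv (κ 3) t * κ 4 t) + (3 : ℝ) * (κ 1 t * deriv (κ 2) t * κ 3 t * κ 4 t) + (4 : ℝ) * (deriv (κ 1) t * κ 2 t * κ 3 t * κ 4 t)) = (0:ℝ) from by linear_combination q5 t,
        show ((1 : ℝ) * (κ 1 t * κ 2 t * κ 3 t * κ 4 t * κ 5 t)) = (0:ℝ) from by linear_combination q6 t]
    simp
end
end
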